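/- arXiv:0903.5498 — 6 statements merged into one kernel-verified Lean document; each statement's English description precedes it below -/
import Mathlib

section
/- Let f : [-r,T] → ℝ be measurable and λ ≥ 1. Then sup_{t∈[0,T]} e^{-λt} ∫₀ᵗ (sup_{-r ≤ u ≤ s}|f(u)|) (t-s)^{-α} ds ≤ λ^{α-1} Γ(1-α) · sup_{-r ≤ u ≤ T} |f(u)| e^{-λu}. -/
open Real MeasureTheory intervalIntegral

/-!
For `s ≤ T` one has `e^{-λs} sup_{[-r,s]} |f| ≤ S := sup_{[-r,T]} |f(u)| e^{-λu}`, so the integrand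
`e^{-λt} sup_{[-r,s]} |f| (t-s)^{-α}` is at most `S e^{-λ(t-s)} (t-s)^{-α}`. After the substitution
`v = t - s`, the integral of the latter over `[0,t]` is bounded by the full Gamma integral
`∫₀^∞ e^{-λv} v^{-α} dv = λ^{α-1} Γ(1-α)`.
-/

-- No integrability of `f` is required: if it fails, the left-hand side is the junk value `0`.
theorem intervalIntegral.integral_mono_on_of_nonneg {f g : ℝ → ℝ} {a b : ℝ} (hab : a ≤ b)
    (hf : ∀ x ∈ Set.Ioc a b, 0 ≤ f x) (hg : IntervalIntegrable g volume a b)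
    (hfg : ∀ x ∈ Set.Ioc a b, f x ≤ g x) :
    ∫ x in a..b, f x ≤ ∫ x in a..b, g x := by
  rw [integral_of_le hab, integral_of_le hab]
  exact integral_mono_of_nonneg (ae_restrict_of_forall_mem measurableSet_Ioc hf)
    ((intervalIntegrable_iff_integrableOn_Ioc_of_le hab).1 hg)
    (ae_restrict_of_forall_mem measurableSet_Ioc hfg)

section Kernel

variable {α lam : ℝ}

theorem integrableOn_exp_neg_mul_mul_rpow_neg_Ioi (hα : α < 1) (hlam : 0 < lam) :
    IntegrableOn (fun v => exp (-lam * v) * v ^ (-α)) (Set.Ioi 0) := by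
  simpa only [rpow_one, mul_comm] using
    integrableOn_rpow_mul_exp_neg_mul_rpow (neg_lt_neg hα) one_pos hlam

theorem integral_exp_neg_mul_mul_rpow_neg_Ioi (hα : α < 1) (hlam : 0 < lam) :
    ∫ v in Set.Ioi 0, exp (-lam * v) * v ^ (-α) = lam ^ (α - 1) * Gamma (1 - α) := by
  have h := integral_rpow_mul_exp_neg_mul_Ioi (sub_pos.2 hα) hlam
  rw [one_div, inv_rpow hlam.le, ← rpow_neg hlam.le, neg_sub] at h
  rw [← h, sub_sub_cancel_left]
  exact integral_congr_ae (ae_of_all _ fun v => by ring_nf)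

theorem intervalIntegrable_exp_neg_mul_mul_rpow_neg_sub (hα : α < 1) (t : ℝ) :
    IntervalIntegrable (fun s => exp (-lam * (t - s)) * (t - s) ^ (-α)) volume 0 t := by
  have hpow : IntervalIntegrable (fun s => (t - s) ^ (-α)) volume 0 t := by
    simpa using
      ((intervalIntegrable_rpow' (a := 0) (b := t) (neg_lt_neg hα)).comp_sub_left t).symm
  exact hpow.continuousOn_mul (by fun_prop)

theorem integral_exp_neg_mul_mul_rpow_neg_sub_le (hα : α < 1) (hlam : 0 < lam) {t : ℝ}
    (ht : 0 ≤ t) :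
    ∫ s in 0..t, exp (-lam * (t - s)) * (t - s) ^ (-α) ≤ lam ^ (α - 1) * Gamma (1 - α) := by
  rw [integral_comp_sub_left (fun v => exp (-lam * v) * v ^ (-α)), sub_self, sub_zero,
    integral_of_le ht, ← integral_exp_neg_mul_mul_rpow_neg_Ioi hα hlam]
  refine setIntegral_mono_set (integrableOn_exp_neg_mul_mul_rpow_neg_Ioi hα hlam) ?_
    Set.Ioc_subset_Ioi_self.eventuallyLE
  filter_upwards [ae_restrict_mem measurableSet_Ioi] with v hv
  exact mul_nonneg (exp_pos _).le (rpow_nonneg (le_of_lt hv) _)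

end Kernel

section WeightedSup

variable {f : ℝ → ℝ} {a lam : ℝ}

theorem bddAbove_image_abs_mul_exp_neg_mul {b M : ℝ} (hlam : 0 ≤ lam)
    (hfb : ∀ u ∈ Set.Icc a b, |f u| ≤ M) :
    BddAbove ((fun u => |f u| * exp (-lam * u)) '' Set.Icc a b) := by
  refine ⟨M * exp (-lam * a), ?_⟩
  rintro _ ⟨u, hu, rfl⟩
  have hexp : exp (-lam * u) ≤ exp (-lam * a) := exp_le_exp.2 (by nlinarith [hu.1])
  exact mul_le_mul (hfb u hu) hexp (exp_pos _).le ((abs_nonneg _).trans (hfb u hu))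

theorem sSup_image_abs_Icc_le_exp_mul_sSup {s T : ℝ} (hlam : 0 ≤ lam) (hsT : s ≤ T)
    (hbdd : BddAbove ((fun u => |f u| * exp (-lam * u)) '' Set.Icc a T)) :
    sSup ((fun u => |f u|) '' Set.Icc a s) ≤
      exp (lam * s) * sSup ((fun u => |f u| * exp (-lam * u)) '' Set.Icc a T) := by
  have hS : 0 ≤ sSup ((fun u => |f u| * exp (-lam * u)) '' Set.Icc a T) :=
    Real.sSup_nonneg (by rintro _ ⟨u, -, rfl⟩; positivity)
  refine Real.sSup_le ?_ (by positivity)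
  rintro _ ⟨u, hu, rfl⟩
  have hweighted : |f u| * exp (-lam * u) ≤
      sSup ((fun u => |f u| * exp (-lam * u)) '' Set.Icc a T) :=
    le_csSup hbdd ⟨u, ⟨hu.1, hu.2.trans hsT⟩, rfl⟩
  calc |f u| = exp (lam * u) * (|f u| * exp (-lam * u)) := by
        rw [mul_left_comm, ← exp_add]; simp
    _ ≤ exp (lam * s) * sSup ((fun u => |f u| * exp (-lam * u)) '' Set.Icc a T) :=
        mul_le_mul (exp_le_exp.2 (by nlinarith [hu.2])) hweighted (by positivity) (exp_pos _).le

theorem exp_neg_mul_mul_sSup_image_abs_le {s t T : ℝ} (hlam : 0 ≤ lam) (hsT : s ≤ T)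
    (hbdd : BddAbove ((fun u => |f u| * exp (-lam * u)) '' Set.Icc a T)) :
    exp (-lam * t) * sSup ((fun u => |f u|) '' Set.Icc a s) ≤
      exp (-lam * (t - s)) * sSup ((fun u => |f u| * exp (-lam * u)) '' Set.Icc a T) :=
  calc exp (-lam * t) * sSup ((fun u => |f u|) '' Set.Icc a s)
      ≤ exp (-lam * t) *
          (exp (lam * s) * sSup ((fun u => |f u| * exp (-lam * u)) '' Set.Icc a T)) := by
        gcongr; exact sSup_image_abs_Icc_le_exp_mul_sSup hlam hsT hbdd
    _ = exp (-lam * (t - s)) * sSup ((fun u => |f u| * exp (-lam * u)) '' Set.Icc a T) := by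
        rw [← mul_assoc, ← exp_add]; ring_nf

end WeightedSup

theorem stmt_8_general (α r T lam : ℝ) (hα1 : α < 1)
    (hlam : 1 ≤ lam) (f : ℝ → ℝ)
    (M : ℝ) (hfb : ∀ u ∈ Set.Icc (-r) T, |f u| ≤ M) :
    ∀ t ∈ Set.Icc (0:ℝ) T,
      Real.exp (-lam * t) *
        (∫ s in (0:ℝ)..t, sSup ((fun u => |f u|) '' Set.Icc (-r) s) * (t - s) ^ (-α)) ≤
      lam ^ (α - 1) * Real.Gamma (1 - α) *
        sSup ((fun u => |f u| * Real.exp (-lam * u)) '' Set.Icc (-r) T) := by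
  rintro t ⟨ht0, htT⟩
  have hlam0 : 0 < lam := one_pos.trans_le hlam
  set S := sSup ((fun u => |f u| * Real.exp (-lam * u)) '' Set.Icc (-r) T)
  have hbdd := bddAbove_image_abs_mul_exp_neg_mul hlam0.le hfb
  have hS : 0 ≤ S := Real.sSup_nonneg (by rintro _ ⟨u, -, rfl⟩; positivity)
  have hpointwise : ∀ s ∈ Set.Ioc 0 t,
      exp (-lam * t) * (sSup ((fun u => |f u|) '' Set.Icc (-r) s) * (t - s) ^ (-α)) ≤
        S * (exp (-lam * (t - s)) * (t - s) ^ (-α)) := by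
    rintro s ⟨-, hst⟩
    have := mul_le_mul_of_nonneg_right
      (exp_neg_mul_mul_sSup_image_abs_le (t := t) hlam0.le (hst.trans htT) hbdd)
      (rpow_nonneg (sub_nonneg.2 hst) (-α))
    linarith
  calc exp (-lam * t) * ∫ s in 0..t, sSup ((fun u => |f u|) '' Set.Icc (-r) s) * (t - s) ^ (-α)
      = ∫ s in 0..t, exp (-lam * t) *
          (sSup ((fun u => |f u|) '' Set.Icc (-r) s) * (t - s) ^ (-α)) :=
        (intervalIntegral.integral_const_mul _ _).symm
    _ ≤ ∫ s in 0..t, S * (exp (-lam * (t - s)) * (t - s) ^ (-α)) := by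
        refine integral_mono_on_of_nonneg ht0 (fun s ⟨_, hst⟩ => ?_)
          ((intervalIntegrable_exp_neg_mul_mul_rpow_neg_sub hα1 t).const_mul S) hpointwise
        have := rpow_nonneg (sub_nonneg.2 hst) (-α)
        have := Real.sSup_nonneg (s := (fun u => |f u|) '' Set.Icc (-r) s)
          (by rintro _ ⟨u, -, rfl⟩; positivity)
        positivity
    _ = S * ∫ s in 0..t, exp (-lam * (t - s)) * (t - s) ^ (-α) :=
        intervalIntegral.integral_const_mul _ _
    _ ≤ S * (lam ^ (α - 1) * Gamma (1 - α)) := by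
        gcongr; exact integral_exp_neg_mul_mul_rpow_neg_sub_le hα1 hlam0 ht0
    _ = lam ^ (α - 1) * Gamma (1 - α) * S := mul_comm _ _

/-- `sup_{t∈[0,T]} e^{-λt} ∫₀ᵗ (sup_{-r≤u≤s}|f(u)|)(t-s)^{-α} ds
      ≤ λ^{α-1} Γ(1-α) sup_{-r≤u≤T}|f(u)|e^{-λu}`. -/
theorem stmt_8 (α r T lam : ℝ) (hα : 0 < α) (hα1 : α < 1) (hr : 0 ≤ r) (hT : 0 < T)
    (hlam : 1 ≤ lam) (f : ℝ → ℝ) (hf : Measurable f)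
    (M : ℝ) (hfb : ∀ u ∈ Set.Icc (-r) T, |f u| ≤ M) :
    ∀ t ∈ Set.Icc (0:ℝ) T,
      Real.exp (-lam * t) *
        (∫ s in (0:ℝ)..t, sSup ((fun u => |f u|) '' Set.Icc (-r) s) * (t - s) ^ (-α)) ≤
      lam ^ (α - 1) * Real.Gamma (1 - α) *
        sSup ((fun u => |f u| * Real.exp (-lam * u)) '' Set.Icc (-r) T) :=
  stmt_8_general α r T lam hα1 hlam f M hfb
end

section
/- Fixed point lemma: Let (X,ρ) be a complete metric space and ρ₀, ρ₁, ρ₂ metrics on X equivalent to ρ. Suppose L : X → X satisfies: (1) there exist μ₀ > 0 and x₀ ∈ X such that L maps the ball B₀ = {x : ρ₀(x₀,x) ≤ μ₀} into itself; (2) there exist a lower semicontinuous function φ : X → [0,∞] and constants C₀, K₀ > 0 such that L(B₀) ⊆ {x : φ(x) ≤ C₀} and ρ₁(L(x),L(y)) ≤ K₀ ρ₁(x,y) for all x,y ∈ B₀ with φ(x),φ(y) ≤ C₀; (3) there exists a ∈ (0,1) with ρ₂(L(x),L(y)) ≤ a ρ₂(x,y) for all x,y ∈ L(B₀). Then there exists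 x* ∈ L(B₀) with L(x*) = x*. -/
open Set

/-- Fixed point lemma (Lemma 7.2 of Nualart–Rascanu): three equivalent metrics,
an invariant ball, a lower semicontinuous Lyapunov function, and a contraction on
the image yield a fixed point in `L(B₀)`. -/
theorem stmt_10 {X : Type*} [MetricSpace X] [CompleteSpace X]
    (ρ₀ ρ₁ ρ₂ : X → X → ℝ)
    -- ρ₀, ρ₁, ρ₂ are metrics on X
    (hsymm : ∀ i ∈ ({ρ₀, ρ₁, ρ₂} : Set (X → X → ℝ)), ∀ x y, i x y = i y x)
    (htri : ∀ i ∈ ({ρ₀, ρ₁, ρ₂} : Set (X → X → ℝ)), ∀ x y z, i x z ≤ i x y + i y z)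
    (heq0 : ∀ i ∈ ({ρ₀, ρ₁, ρ₂} : Set (X → X → ℝ)), ∀ x y, i x y = 0 ↔ x = y)
    -- each of them is equivalent to the metric of X
    (hequiv : ∀ i ∈ ({ρ₀, ρ₁, ρ₂} : Set (X → X → ℝ)),
      ∃ c > (0:ℝ), ∃ C > (0:ℝ), ∀ x y, c * dist x y ≤ i x y ∧ i x y ≤ C * dist x y)
    (L : X → X) (μ₀ : ℝ) (hμ₀ : 0 < μ₀) (x₀ : X)
    (B₀ : Set X) (hB₀ : B₀ = {x : X | ρ₀ x₀ x ≤ μ₀})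
    (hinv : MapsTo L B₀ B₀)
    (φ : X → ENNReal) (hφ : LowerSemicontinuous φ)
    (C₀ : ENNReal) (hC₀ : 0 < C₀) (K₀ : ℝ) (hK₀ : 0 < K₀)
    (hLB : L '' B₀ ⊆ {x : X | φ x ≤ C₀})
    (hlip : ∀ x ∈ B₀ ∩ {x : X | φ x ≤ C₀}, ∀ y ∈ B₀ ∩ {x : X | φ x ≤ C₀},
      ρ₁ (L x) (L y) ≤ K₀ * ρ₁ x y)
    (a : ℝ) (ha : a ∈ Set.Ioo (0:ℝ) 1)
    (hcontr : ∀ x ∈ L '' B₀, ∀ y ∈ L '' B₀, ρ₂ (L x) (L y) ≤ a * ρ₂ x y) :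
    ∃ x' ∈ L '' B₀, L x' = x' := by
  obtain ⟨ha0, ha1⟩ := ha
  obtain ⟨c₀, hc₀, D₀, hD₀, h₀⟩ := hequiv ρ₀ (by simp)
  obtain ⟨c₁, hc₁, D₁, hD₁, h₁⟩ := hequiv ρ₁ (by simp)
  obtain ⟨c₂, hc₂, D₂, hD₂, h₂⟩ := hequiv ρ₂ (by simp)
  have hx₀B : x₀ ∈ B₀ := by
    rw [hB₀]
    have : ρ₀ x₀ x₀ = 0 := (heq0 ρ₀ (by simp) x₀ x₀).2 rfl
    simp [this, hμ₀.le]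
  have hitB : ∀ n, L^[n] x₀ ∈ B₀ := by
    intro n
    induction n with
    | zero => exact hx₀B
    | succ n ih => rw [Function.iterate_succ_apply']; exact hinv ih
  set f : ℕ → X := fun n => L^[n + 1] x₀ with hf
  have hfL : ∀ n, f (n + 1) = L (f n) := fun n => Function.iterate_succ_apply' L (n + 1) x₀
  have hfim : ∀ n, f n ∈ L '' B₀ := fun n =>
    ⟨L^[n] x₀, hitB n, (Function.iterate_succ_apply' L n x₀).symm⟩
  have hfB : ∀ n, f n ∈ B₀ := fun n => hitB (n + 1)
  have hφf : ∀ n, φ (f n) ≤ C₀ := fun n => hLB (hfim n)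
  -- geometric decay in ρ₂
  have hkey : ∀ n, ρ₂ (f n) (f (n + 1)) ≤ a ^ n * ρ₂ (f 0) (f 1) := by
    intro n
    induction n with
    | zero => simp
    | succ n ih =>
      have := hcontr (f n) (hfim n) (f (n + 1)) (hfim (n + 1))
      rw [← hfL n, ← hfL (n + 1)] at this
      calc ρ₂ (f (n + 1)) (f (n + 2)) ≤ a * ρ₂ (f n) (f (n + 1)) := this
        _ ≤ a * (a ^ n * ρ₂ (f 0) (f 1)) := by
            exact mul_le_mul_of_nonneg_left ih ha0.le
        _ = a ^ (n + 1) * ρ₂ (f 0) (f 1) := by ring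
  have hdist : ∀ n, dist (f n) (f (n + 1)) ≤ (ρ₂ (f 0) (f 1) / c₂) * a ^ n := by
    intro n
    have h1' : c₂ * dist (f n) (f (n + 1)) ≤ ρ₂ (f n) (f (n + 1)) := (h₂ _ _).1
    have := h1'.trans (hkey n)
    rw [div_mul_eq_mul_div, le_div_iff₀ hc₂]
    nlinarith [hkey n, h1']
  have hcauchy : CauchySeq f := cauchySeq_of_le_geometric a _ ha1 hdist
  obtain ⟨x', hx'⟩ := cauchySeq_tendsto_of_complete hcauchy
  have hdtend : Filter.Tendsto (fun n => dist (f n) x') Filter.atTop (nhds 0) :=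
    tendsto_iff_dist_tendsto_zero.1 hx'
  -- x' ∈ B₀
  have hx'B : x' ∈ B₀ := by
    rw [hB₀]
    have hle : ∀ n, ρ₀ x₀ x' ≤ μ₀ + D₀ * dist (f n) x' := by
      intro n
      have htr := htri ρ₀ (by simp) x₀ (f n) x'
      have h1' : ρ₀ x₀ (f n) ≤ μ₀ := by have := hfB n; rwa [hB₀] at this
      have h2' : ρ₀ (f n) x' ≤ D₀ * dist (f n) x' := (h₀ _ _).2
      linarith
    have : Filter.Tendsto (fun n => μ₀ + D₀ * dist (f n) x') Filter.atTop (nhds (μ₀ + D₀ * 0)) :=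
      (tendsto_const_nhds.add ((tendsto_const_nhds.mul hdtend)))
    simpa using ge_of_tendsto' (by simpa using this) hle
  -- φ x' ≤ C₀
  have hx'φ : φ x' ≤ C₀ := by
    by_contra h
    push_neg at h
    have := (hx'.eventually (hφ x' C₀ h)).exists
    obtain ⟨n, hn⟩ := this
    exact absurd (hφf n) (not_le.2 hn)
  -- L is continuous along f n towards x'
  have hLf : Filter.Tendsto (fun n => L (f n)) Filter.atTop (nhds (L x')) := by
    rw [tendsto_iff_dist_tendsto_zero]
    have hb : ∀ n, dist (L (f n)) (L x') ≤ (K₀ * D₁ / c₁) * dist (f n) x' := by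
      intro n
      have hlip' := hlip (f n) ⟨hfB n, hφf n⟩ x' ⟨hx'B, hx'φ⟩
      have h1' : c₁ * dist (L (f n)) (L x') ≤ ρ₁ (L (f n)) (L x') := (h₁ _ _).1
      have h2' : ρ₁ (f n) x' ≤ D₁ * dist (f n) x' := (h₁ _ _).2
      rw [div_mul_eq_mul_div, le_div_iff₀ hc₁]
      nlinarith [dist_nonneg (x := f n) (y := x')]
    have h0' : ∀ n, (0:ℝ) ≤ dist (L (f n)) (L x') := fun n => dist_nonneg
    have := hdtend.const_mul (K₀ * D₁ / c₁)
    rw [mul_zero] at this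
    exact squeeze_zero h0' hb this
  have hLf' : Filter.Tendsto (fun n => L (f n)) Filter.atTop (nhds x') := by
    have : Filter.Tendsto (fun n => f (n + 1)) Filter.atTop (nhds x') :=
      hx'.comp (Filter.tendsto_add_atTop_nat 1)
    simpa [hfL] using this
  have hfix : L x' = x' := tendsto_nhds_unique hLf hLf'
  exact ⟨x', ⟨x', hx'B, hfix⟩, hfix⟩
end

section
/- Hölder-type estimate: let 0 < α < 1/2, γ ∈ [0,1], and define φ(γ,α) = 2α if γ = 1, φ(γ,α) any number > 1 + (2α-1)/γ if (1-2α)/(1-α) ≤ γ < 1, and φ(γ,α) = α if 0 ≤ γ < (1-2α)/(1-α). Then for every measurable bounded f : [-r, T-r] → ℝ and t ∈ (0,T], ∫_{-r}^{t-r} |f(s)|^γ (t-r-s)^{-2α} ds ≤ C_α (∫_{-r}^{t-r} |f(s)| (t-r-s)^{-φ(γ,α)} ds)^γ · t^{1-γ-2α+φ(γ,α)γ}, for a constant C_α depending only on α, γ, T; moreover the exponent satisfies 1-γ-2α+φ(γ,α)γ ≥ 0 and α < φ(γ,α) ≤ 2α (in the case (1-2α)/(1-α) ≤ γ < 1, choosing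 φ(γ,α) accordingly). -/
/-!
Split the integrand as `(|f s| (t-r-s)^(-φ))^γ · ((t-r-s)^β)^(1-γ)` with
`β = (φγ - 2α)/(1-γ)` and apply Hölder's inequality with exponents `1/γ` and `1/(1-γ)`.
The second factor integrates to `t^(β+1)/(β+1)`, which is finite precisely when
`κ = 1 - γ - 2α + φγ = (β+1)(1-γ)` is positive; the piecewise choice of `φ(γ,α)` is made so
that this holds. For `γ = 1` we have `φ = 2α` and the estimate is an equality.
-/

open Real MeasureTheory intervalIntegral

theorem integral_rpow_mul_rpow_le {X : Type*} [MeasurableSpace X] {μ : Measure X} {f g : X → ℝ}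
    (hf0 : 0 ≤ᵐ[μ] f) (hg0 : 0 ≤ᵐ[μ] g) (hf : Integrable f μ) (hg : Integrable g μ)
    {p q : ℝ} (hp : 0 ≤ p) (hq : 0 ≤ q) (hpq : p + q = 1) :
    ∫ x, f x ^ p * g x ^ q ∂μ ≤ (∫ x, f x ∂μ) ^ p * (∫ x, g x ∂μ) ^ q := by
  have hfg0 : 0 ≤ᵐ[μ] fun x => f x ^ p * g x ^ q := by
    filter_upwards [hf0, hg0] with x hfx hgx
    exact mul_nonneg (rpow_nonneg hfx p) (rpow_nonneg hgx q)
  have hofReal : (fun x => ENNReal.ofReal (f x ^ p * g x ^ q)) =ᵐ[μ]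
      fun x => ENNReal.ofReal (f x) ^ p * ENNReal.ofReal (g x) ^ q := by
    filter_upwards [hf0, hg0] with x hfx hgx
    rw [ENNReal.ofReal_mul (rpow_nonneg hfx p), ENNReal.ofReal_rpow_of_nonneg hfx hp,
      ENNReal.ofReal_rpow_of_nonneg hgx hq]
  have hHolder := ENNReal.lintegral_mul_norm_pow_le hf.aemeasurable.ennreal_ofReal
    hg.aemeasurable.ennreal_ofReal hp hq hpq
  rw [integral_eq_lintegral_of_nonneg_ae hfg0
      ((hf.aemeasurable.pow_const p).mul (hg.aemeasurable.pow_const q)).aestronglyMeasurable,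
    integral_eq_lintegral_of_nonneg_ae hf0 hf.aestronglyMeasurable,
    integral_eq_lintegral_of_nonneg_ae hg0 hg.aestronglyMeasurable, lintegral_congr_ae hofReal,
    ENNReal.toReal_rpow, ENNReal.toReal_rpow, ← ENNReal.toReal_mul]
  exact ENNReal.toReal_mono (ENNReal.mul_ne_top
    (ENNReal.rpow_ne_top_of_nonneg hp hf.lintegral_lt_top.ne)
    (ENNReal.rpow_ne_top_of_nonneg hq hg.lintegral_lt_top.ne)) hHolder

lemma intervalIntegrable_sub_rpow {a b β : ℝ} (hβ : -1 < β) :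
    IntervalIntegrable (fun s => (b - s) ^ β) volume a b := by
  simpa using (intervalIntegrable_rpow' (a := b - a) (b := 0) hβ).comp_sub_left b

lemma integral_sub_rpow {a b β : ℝ} (hβ : -1 < β) :
    ∫ s in a..b, (b - s) ^ β = (b - a) ^ (β + 1) / (β + 1) := by
  rw [integral_comp_sub_left (fun u => u ^ β) b, sub_self, integral_rpow (Or.inl hβ),
    zero_rpow (by linarith), sub_zero]

theorem integral_abs_rpow_mul_sub_rpow_le {f : ℝ → ℝ} (hf : Measurable f) {M : ℝ}
    (hM : ∀ s, |f s| ≤ M) {a b γ φ c : ℝ} (hab : a ≤ b) (hγ0 : 0 ≤ γ) (hγ1 : γ < 1)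
    (hφ : φ < 1) (hκ : 0 < 1 - γ - c + φ * γ) :
    ∫ s in a..b, |f s| ^ γ * (b - s) ^ (-c) ≤
      ((1 - γ) / (1 - γ - c + φ * γ)) ^ (1 - γ) *
        (∫ s in a..b, |f s| * (b - s) ^ (-φ)) ^ γ * (b - a) ^ (1 - γ - c + φ * γ) := by
  set κ := 1 - γ - c + φ * γ
  have h1γ : 0 < 1 - γ := by linarith
  set β := κ / (1 - γ) - 1 with hβ
  have hβ1 : -1 < β := by rw [hβ]; linarith [div_pos hκ h1γ]
  have hβγ : β * (1 - γ) = φ * γ - c := by rw [hβ]; field_simp; ring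
  set μ := volume.restrict (Set.Ioo a b)
  have hmem : ∀ᵐ s ∂μ, s ∈ Set.Ioo a b := ae_restrict_mem measurableSet_Ioo
  have hinterval (F : ℝ → ℝ) : ∫ s in a..b, F s = ∫ s, F s ∂μ := by
    rw [integral_of_le hab, integral_Ioc_eq_integral_Ioo]
  have hintegrable {F : ℝ → ℝ} (hF : IntervalIntegrable F volume a b) : Integrable F μ :=
    ((intervalIntegrable_iff_integrableOn_Ioc_of_le hab).mp hF).mono_set Set.Ioo_subset_Ioc_self
  have hg : Integrable (fun s => |f s| * (b - s) ^ (-φ)) μ :=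
    (hintegrable (intervalIntegrable_sub_rpow (by linarith))).bdd_mul
      hf.abs.aestronglyMeasurable (.of_forall fun s => by simpa using hM s)
  have hh : Integrable (fun s => (b - s) ^ β) μ := hintegrable (intervalIntegrable_sub_rpow hβ1)
  have hg0 : 0 ≤ᵐ[μ] fun s => |f s| * (b - s) ^ (-φ) := by
    filter_upwards [hmem] with s hs
    exact mul_nonneg (abs_nonneg _) (rpow_nonneg (by linarith [hs.2]) _)
  have hh0 : 0 ≤ᵐ[μ] fun s => (b - s) ^ β := by
    filter_upwards [hmem] with s hs
    exact rpow_nonneg (by linarith [hs.2]) _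
  have hsplit : (fun s => |f s| ^ γ * (b - s) ^ (-c)) =ᵐ[μ]
      fun s => (|f s| * (b - s) ^ (-φ)) ^ γ * ((b - s) ^ β) ^ (1 - γ) := by
    filter_upwards [hmem] with s hs
    have hbs : 0 < b - s := by linarith [hs.2]
    rw [mul_rpow (abs_nonneg _) (rpow_nonneg hbs.le _), ← rpow_mul hbs.le, ← rpow_mul hbs.le,
      hβγ, mul_assoc, ← rpow_add hbs]
    ring_nf
  have hconst : ((b - a) ^ (β + 1) / (β + 1)) ^ (1 - γ) =
      ((1 - γ) / κ) ^ (1 - γ) * (b - a) ^ κ := by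
    have hβ1' : β + 1 = κ / (1 - γ) := by rw [hβ]; ring
    rw [div_rpow (rpow_nonneg (by linarith) _) (by linarith), ← rpow_mul (by linarith), hβ1',
      div_mul_cancel₀ _ h1γ.ne', div_eq_mul_inv, ← inv_rpow (by positivity), inv_div, mul_comm]
  calc ∫ s in a..b, |f s| ^ γ * (b - s) ^ (-c)
      = ∫ s, (|f s| * (b - s) ^ (-φ)) ^ γ * ((b - s) ^ β) ^ (1 - γ) ∂μ := by
        rw [hinterval, integral_congr_ae hsplit]
    _ ≤ (∫ s, |f s| * (b - s) ^ (-φ) ∂μ) ^ γ * (∫ s, (b - s) ^ β ∂μ) ^ (1 - γ) :=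
        integral_rpow_mul_rpow_le hg0 hh0 hg hh hγ0 h1γ.le (by ring)
    _ = ((1 - γ) / κ) ^ (1 - γ) *
        (∫ s in a..b, |f s| * (b - s) ^ (-φ)) ^ γ * (b - a) ^ κ := by
        rw [← hinterval, ← hinterval, integral_sub_rpow hβ1, hconst]
        ring

lemma exponent_bounds_of_lt_one {α γ φ : ℝ} (hα : 0 < α) (hα2 : α < 1/2) (hγ0 : 0 ≤ γ)
    (hγ1 : γ < 1)
    (hφ2 : (1 - 2*α)/(1 - α) ≤ γ → γ < 1 → (1 + (2*α - 1)/γ < φ ∧ φ ≤ 2*α))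
    (hφ3 : γ < (1 - 2*α)/(1 - α) → φ = α) :
    α ≤ φ ∧ φ ≤ 2*α ∧ 0 < 1 - γ - 2*α + φ * γ := by
  have h1α : 0 < 1 - α := by linarith
  by_cases hthr : γ < (1 - 2*α)/(1 - α)
  · obtain rfl := hφ3 hthr
    have := (lt_div_iff₀ h1α).mp hthr
    exact ⟨le_rfl, by linarith, by linarith⟩
  · rw [not_lt] at hthr
    have hγ : 0 < γ := lt_of_lt_of_le (div_pos (by linarith) h1α) hthr
    have h' : 1 - 2*α ≤ γ * (1 - α) := (div_le_iff₀ h1α).mp hthr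
    obtain ⟨hlow, hup⟩ := hφ2 hthr hγ1
    have hlow' : γ + (2*α - 1) < φ * γ := by
      have := mul_lt_mul_of_pos_right hlow hγ
      rwa [add_mul, div_mul_cancel₀ _ hγ.ne', one_mul] at this
    exact ⟨by nlinarith, hup, by linarith⟩

theorem stmt_11_general (α γ φ r T : ℝ) (hα : 0 < α) (hα2 : α < 1/2)
    (hγ0 : 0 ≤ γ) (hγ1 : γ ≤ 1)
    -- the piecewise choice of φ(γ,α)
    (hφ1 : γ = 1 → φ = 2 * α)
    (hφ2 : (1 - 2*α)/(1 - α) ≤ γ → γ < 1 → (1 + (2*α - 1)/γ < φ ∧ φ ≤ 2*α))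
    (hφ3 : γ < (1 - 2*α)/(1 - α) → φ = α) :
    (∃ C > 0, ∀ f : ℝ → ℝ, Measurable f → (∃ M, ∀ s, |f s| ≤ M) →
      ∀ t ∈ Set.Ioc (0:ℝ) T,
        (∫ s in (-r)..(t - r), |f s| ^ γ * (t - r - s) ^ (-(2*α))) ≤
          C * (∫ s in (-r)..(t - r), |f s| * (t - r - s) ^ (-φ)) ^ γ *
            t ^ (1 - γ - 2*α + φ * γ)) ∧
    1 - γ - 2*α + φ * γ ≥ 0 ∧ α ≤ φ ∧ φ ≤ 2*α := by
  rcases hγ1.eq_or_lt with rfl | hγ1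
  · obtain rfl := hφ1 rfl
    refine ⟨⟨1, one_pos, fun f _ _ t _ => ?_⟩, by norm_num, by linarith, le_rfl⟩
    simp
  obtain ⟨hαφ, hφα, hκ⟩ := exponent_bounds_of_lt_one hα hα2 hγ0 hγ1 hφ2 hφ3
  refine ⟨⟨((1 - γ) / (1 - γ - 2*α + φ * γ)) ^ (1 - γ), rpow_pos_of_pos (div_pos (by linarith) hκ) (1 - γ), ?_⟩, hκ.le, hαφ, hφα⟩
  rintro f hf ⟨M, hM⟩ t ⟨ht, -⟩
  simpa using integral_abs_rpow_mul_sub_rpow_le hf hM (a := -r) (b := t - r) (by linarith)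
    hγ0 hγ1 (by linarith) hκ

/-- Hölder-type estimate with the piecewise exponent `φ(γ,α)`. -/
theorem stmt_11 (α γ φ r T : ℝ) (hα : 0 < α) (hα2 : α < 1/2)
    (hγ0 : 0 ≤ γ) (hγ1 : γ ≤ 1) (hr : 0 ≤ r) (hT : r < T)
    -- the piecewise choice of φ(γ,α)
    (hφ1 : γ = 1 → φ = 2 * α)
    (hφ2 : (1 - 2*α)/(1 - α) ≤ γ → γ < 1 → (1 + (2*α - 1)/γ < φ ∧ φ ≤ 2*α))
    (hφ3 : γ < (1 - 2*α)/(1 - α) → φ = α) :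
    (∃ C > 0, ∀ f : ℝ → ℝ, Measurable f → (∃ M, ∀ s, |f s| ≤ M) →
      ∀ t ∈ Set.Ioc (0:ℝ) T,
        (∫ s in (-r)..(t - r), |f s| ^ γ * (t - r - s) ^ (-(2*α))) ≤
          C * (∫ s in (-r)..(t - r), |f s| * (t - r - s) ^ (-φ)) ^ γ *
            t ^ (1 - γ - 2*α + φ * γ)) ∧
    1 - γ - 2*α + φ * γ ≥ 0 ∧ α ≤ φ ∧ φ ≤ 2*α :=
  stmt_11_general α γ φ r T hα hα2 hγ0 hγ1 hφ1 hφ2 hφ3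
end

section
/- Splitting into early and tail terms: let x : [-r,T] → ℝ^d be (1-α)-Hölder continuous with constant K in the sense that |x(t)-x(s)| ≤ K(t-s)^{1-α} for all -r ≤ s ≤ t ≤ T, and also |x(t)-x(t-r)| ≤ K r^{1-α} for all t ∈ [r,T]. Then for every t ∈ (r,T], ∫₀ᵗ |x(t)-x(t-r)-x(s)+x(s-r)| (t-s)^{-α-1} ds ≤ (2/α + 2/(1-2α)) K r^{1-2α}, provided 0 < α < 1/2. -/
/-!
On `[0, t - r]` the integrand is a difference of two delayed increments `x u - x (u - r)`, each
at most `K r^(1-α)`, against the kernel `(t - s)^(-α-1)`, whose integral there is at most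
`r^(-α)/α`. On `[t - r, t]` it is instead a difference of two increments over `[s, t]` and
`[s - r, t - r]`, each at most `K (t - s)^(1-α)`, which leaves the integrable kernel
`(t - s)^(-2α)` with integral `r^(1-2α)/(1-2α)`.
-/

open Real MeasureTheory intervalIntegral Set
open scoped Interval

section DelayedIncrement

variable {E : Type*} [SeminormedAddCommGroup E] {x : ℝ → E} {β r T K s t : ℝ}

theorem norm_delayed_increment_le_two_mul_delay
    (hx : ∀ s ∈ Icc (-r) T, ∀ t ∈ Icc (-r) T, s ≤ t →
      ‖x t - x s‖ ≤ K * (t - s) ^ β)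
    (hr : 0 ≤ r) (hs : 0 ≤ s) (hst : s ≤ t) (ht : t ≤ T) :
    ‖x t - x (t - r) - x s + x (s - r)‖ ≤ 2 * K * r ^ β := by
  have hdelay : ∀ u ∈ Icc 0 T, ‖x u - x (u - r)‖ ≤ K * r ^ β := fun u hu => by
    simpa using hx (u - r) ⟨by linarith [hu.1], by linarith [hu.2]⟩ u
      ⟨by linarith [hu.1], hu.2⟩ (by linarith)
  calc ‖x t - x (t - r) - x s + x (s - r)‖
      = ‖(x t - x (t - r)) - (x s - x (s - r))‖ := by congr 1; abel
    _ ≤ ‖x t - x (t - r)‖ + ‖x s - x (s - r)‖ := norm_sub_le _ _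
    _ ≤ K * r ^ β + K * r ^ β :=
        add_le_add (hdelay t ⟨hs.trans hst, ht⟩) (hdelay s ⟨hs, hst.trans ht⟩)
    _ = 2 * K * r ^ β := by ring

theorem norm_delayed_increment_le_two_mul_holder
    (hx : ∀ s ∈ Icc (-r) T, ∀ t ∈ Icc (-r) T, s ≤ t →
      ‖x t - x s‖ ≤ K * (t - s) ^ β)
    (hr : 0 ≤ r) (hs : 0 ≤ s) (hst : s ≤ t) (ht : t ≤ T) :
    ‖x t - x (t - r) - x s + x (s - r)‖ ≤ 2 * K * (t - s) ^ β := by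
  have hnow := hx s ⟨by linarith, by linarith⟩ t ⟨by linarith, ht⟩ hst
  have hpast := hx (s - r) ⟨by linarith, by linarith⟩ (t - r) ⟨by linarith, by linarith⟩
    (by linarith)
  rw [sub_sub_sub_cancel_right] at hpast
  calc ‖x t - x (t - r) - x s + x (s - r)‖
      = ‖(x t - x s) - (x (t - r) - x (s - r))‖ := by congr 1; abel
    _ ≤ ‖x t - x s‖ + ‖x (t - r) - x (s - r)‖ := norm_sub_le _ _
    _ ≤ K * (t - s) ^ β + K * (t - s) ^ β := add_le_add hnow hpast
    _ = 2 * K * (t - s) ^ β := by ring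

end DelayedIncrement

section PowerKernel

variable {p r t : ℝ}

theorem intervalIntegrable_sub_rpow_of_pos_le (hr : 0 < r) (hrt : r ≤ t) :
    IntervalIntegrable (fun s => (t - s) ^ p) volume 0 (t - r) := by
  have h0 : (0 : ℝ) ∉ [[r, t]] := fun h => by
    rw [uIcc_of_le hrt] at h; linarith [h.1]
  simpa using ((intervalIntegrable_rpow (μ := volume) (Or.inr h0)).comp_sub_left t).symm

theorem integral_sub_rpow_le_of_lt_neg_one (hp : p < -1) (hr : 0 < r) (hrt : r ≤ t) :
    ∫ s in (0:ℝ)..(t - r), (t - s) ^ p ≤ r ^ (p + 1) / -(p + 1) := by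
  have h0 : (0 : ℝ) ∉ [[r, t]] := fun h => by
    rw [uIcc_of_le hrt] at h; linarith [h.1]
  have ht : 0 ≤ t ^ (p + 1) := rpow_nonneg (hr.le.trans hrt) _
  rw [integral_comp_sub_left (fun u => u ^ p), sub_zero, sub_sub_cancel,
    integral_rpow (Or.inr ⟨by linarith, h0⟩), div_neg, ← neg_div]
  exact div_le_div_of_nonpos_of_le (by linarith) (by linarith)

theorem intervalIntegrable_sub_rpow_of_neg_one_lt (hp : -1 < p) :
    IntervalIntegrable (fun s => (t - s) ^ p) volume (t - r) t := by
  simpa using (intervalIntegrable_rpow' (a := r) (b := 0) hp).comp_sub_left t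

theorem integral_sub_rpow_of_neg_one_lt (hp : -1 < p) :
    ∫ s in (t - r)..t, (t - s) ^ p = r ^ (p + 1) / (p + 1) := by
  rw [integral_comp_sub_left (fun u => u ^ p), sub_self, sub_sub_cancel,
    integral_rpow (Or.inl hp), zero_rpow (by linarith), sub_zero]

end PowerKernel

theorem intervalIntegral_le_add_of_le_on_Ioo {f g₁ g₂ : ℝ → ℝ} {a b c : ℝ}
    (hab : a ≤ b) (hbc : b ≤ c)
    (hg₁ : IntervalIntegrable g₁ volume a b) (hg₂ : IntervalIntegrable g₂ volume b c)
    (hf : ∀ s ∈ Ioo a c, 0 ≤ f s)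
    (hfg₁ : ∀ s ∈ Ioo a b, f s ≤ g₁ s) (hfg₂ : ∀ s ∈ Ioo b c, f s ≤ g₂ s) :
    ∫ s in a..c, f s ≤ (∫ s in a..b, g₁ s) + ∫ s in b..c, g₂ s := by
  by_cases hfi : IntervalIntegrable f volume a c
  · have hf₁ : IntervalIntegrable f volume a b := hfi.mono_set (by
      rw [uIcc_of_le hab, uIcc_of_le (hab.trans hbc)]; exact Icc_subset_Icc le_rfl hbc)
    have hf₂ : IntervalIntegrable f volume b c := hfi.mono_set (by
      rw [uIcc_of_le hbc, uIcc_of_le (hab.trans hbc)]; exact Icc_subset_Icc hab le_rfl)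
    rw [← integral_add_adjacent_intervals hf₁ hf₂]
    exact add_le_add (integral_mono_on_of_le_Ioo hab hf₁ hg₁ hfg₁)
      (integral_mono_on_of_le_Ioo hbc hf₂ hg₂ hfg₂)
  · have hg_nonneg {g : ℝ → ℝ} {u v : ℝ} (huv : u ≤ v)
        (hg : IntervalIntegrable g volume u v)
        (hfg : ∀ s ∈ Ioo u v, f s ≤ g s) (hsub : Ioo u v ⊆ Ioo a c) :
        0 ≤ ∫ s in u..v, g s := by
      simpa using integral_mono_on_of_le_Ioo huv intervalIntegrable_const hg
        fun s hs => (hf s (hsub hs)).trans (hfg s hs)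
    rw [integral_undef hfi]
    exact add_nonneg (hg_nonneg hab hg₁ hfg₁ (Ioo_subset_Ioo le_rfl hbc))
      (hg_nonneg hbc hg₂ hfg₂ (Ioo_subset_Ioo hab le_rfl))

theorem stmt_13_general (d : ℕ) (α r T K : ℝ) (hα : 0 < α) (hα2 : α < 1/2)
    (hr : 0 < r) (hK : 0 < K)
    (x : ℝ → EuclideanSpace ℝ (Fin d))
    (hHold : ∀ s ∈ Set.Icc (-r) T, ∀ t ∈ Set.Icc (-r) T, s ≤ t →
      ‖x t - x s‖ ≤ K * (t - s) ^ (1 - α)) :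
    ∀ t ∈ Set.Ioc r T,
      (∫ s in (0:ℝ)..t, ‖x t - x (t - r) - x s + x (s - r)‖ * (t - s) ^ (-α - 1)) ≤
        (2/α + 2/(1 - 2*α)) * K * r ^ (1 - 2*α) := by
  rintro t ⟨hrt, htT⟩
  have hearly := integral_sub_rpow_le_of_lt_neg_one (p := -α - 1) (by linarith) hr hrt.le
  have htail := integral_sub_rpow_of_neg_one_lt (p := -(2 * α)) (t := t) (r := r) (by linarith)
  rw [show -α - 1 + 1 = -α by ring, neg_neg] at hearly
  rw [show -(2 * α) + 1 = 1 - 2 * α by ring] at htail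
  calc (∫ s in (0:ℝ)..t, ‖x t - x (t - r) - x s + x (s - r)‖ * (t - s) ^ (-α - 1))
      ≤ (∫ s in (0:ℝ)..(t - r), 2 * K * r ^ (1 - α) * (t - s) ^ (-α - 1))
        + ∫ s in (t - r)..t, 2 * K * (t - s) ^ (-(2 * α)) := by
        refine intervalIntegral_le_add_of_le_on_Ioo (by linarith) (by linarith)
          ((intervalIntegrable_sub_rpow_of_pos_le hr hrt.le).const_mul _)
          ((intervalIntegrable_sub_rpow_of_neg_one_lt (by linarith)).const_mul _)
          (fun s hs => ?_) (fun s hs => ?_) (fun s hs => ?_)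
        · exact mul_nonneg (norm_nonneg _) (rpow_nonneg (by linarith [hs.2]) _)
        · exact mul_le_mul_of_nonneg_right
            (norm_delayed_increment_le_two_mul_delay hHold hr.le hs.1.le (by linarith [hs.2]) htT)
            (rpow_nonneg (by linarith [hs.2]) _)
        · have hts : 0 < t - s := by linarith [hs.2]
          calc _ ≤ 2 * K * (t - s) ^ (1 - α) * (t - s) ^ (-α - 1) :=
                mul_le_mul_of_nonneg_right (norm_delayed_increment_le_two_mul_holder hHold
                  hr.le (by linarith [hs.1]) hs.2.le htT) (rpow_nonneg hts.le _)
            _ = 2 * K * (t - s) ^ (-(2 * α)) := by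
                rw [mul_assoc, ← rpow_add hts]; ring_nf
    _ ≤ 2 * K * r ^ (1 - α) * (r ^ (-α) / α) + 2 * K * (r ^ (1 - 2 * α) / (1 - 2 * α)) := by
        rw [intervalIntegral.integral_const_mul, intervalIntegral.integral_const_mul, htail]
        gcongr
    _ = (2/α + 2/(1 - 2*α)) * K * r ^ (1 - 2*α) := by
        rw [mul_div_assoc', mul_assoc, ← rpow_add hr]
        ring_nf

/-- Splitting into early and tail terms for the delayed increment integral. -/
theorem stmt_13 (d : ℕ) (α r T K : ℝ) (hα : 0 < α) (hα2 : α < 1/2)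
    (hr : 0 < r) (hT : r < T) (hK : 0 < K)
    (x : ℝ → EuclideanSpace ℝ (Fin d))
    (hHold : ∀ s ∈ Set.Icc (-r) T, ∀ t ∈ Set.Icc (-r) T, s ≤ t →
      ‖x t - x s‖ ≤ K * (t - s) ^ (1 - α))
    (hdelay : ∀ t ∈ Set.Icc r T, ‖x t - x (t - r)‖ ≤ K * r ^ (1 - α)) :
    ∀ t ∈ Set.Ioc r T,
      (∫ s in (0:ℝ)..t, ‖x t - x (t - r) - x s + x (s - r)‖ * (t - s) ^ (-α - 1)) ≤
        (2/α + 2/(1 - 2*α)) * K * r ^ (1 - 2*α) :=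
  stmt_13_general d α r T K hα hα2 hr hK x hHold
end

section
/- Suppose f : [0,T] → ℝ^d is measurable with sup_{t∈[0,T]} ∫₀ᵗ |f(s)|(t-s)^{-α} ds < ∞, and let F(t) := ∫₀ᵗ f(s) ds. Then F ∈ W₀^{α,∞}(0,T;ℝ^d) and |F(t)| + ∫₀ᵗ |F(t)-F(s)|(t-s)^{-α-1} ds ≤ C_{α,T} ∫₀ᵗ |f(s)|(t-s)^{-α} ds for all t ∈ [0,T], where C_{α,T} depends only on α and T. -/
open Real MeasureTheory intervalIntegral

/-!
The hypothesis only controls Bochner integrals, which are `0` when the integrand is not integrable,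
so the real work is to show that `I(t) = ∫₀ᵗ |f(s)| (t - s)^{-α} ds`, taken as a lower integral, is
at most `M`. By Tonelli, `∫₀ᵗ I(x) dx ≤ t^{1-α} / (1 - α) · ∫₀ᵗ |f| < ∞`, so `I(x) < ∞`, hence
`I(x) ≤ M`, for almost every `x < t`; as `(t - s)^{-α} ≤ (x - s)^{-α}` for `s < x < t`, letting
such `x` increase to `t` gives `I(t) ≤ M`.

The bound itself: `|F(t)| ≤ t^α I(t)` since `(t - s)^{-α} ≥ t^{-α}`, and exchanging the order of
integration, `∫₀ᵗ |F(t) - F(s)| (t - s)^{-α-1} ds ≤ ∫₀ᵗ |f(u)| ∫₀ᵘ (t - s)^{-α-1} ds du ≤ α⁻¹ I(t)`.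
-/

open Set Function
open scoped ENNReal

theorem lintegral_Ioc_lintegral_Ioc_swap (a t : ℝ) {P : ℝ → ℝ → ℝ≥0∞}
    (hP : Measurable (uncurry P)) :
    ∫⁻ s in Ioc a t, ∫⁻ u in Ioc s t, P s u = ∫⁻ u in Ioc a t, ∫⁻ s in Ioo a u, P s u := by
  have hQ : Measurable (uncurry fun s u => (Ioi s).indicator (P s) u) := by
    have : (uncurry fun s u => (Ioi s).indicator (P s) u) =
        {p : ℝ × ℝ | p.1 < p.2}.indicator (uncurry P) := by
      ext ⟨s, u⟩
      simp [indicator_apply]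
    rw [this]
    exact hP.indicator (measurableSet_lt measurable_fst measurable_snd)
  calc ∫⁻ s in Ioc a t, ∫⁻ u in Ioc s t, P s u
      = ∫⁻ s in Ioc a t, ∫⁻ u in Ioc a t, (Ioi s).indicator (P s) u := by
        refine setLIntegral_congr_fun measurableSet_Ioc fun s hs => ?_
        rw [lintegral_indicator measurableSet_Ioi, Measure.restrict_restrict measurableSet_Ioi,
          inter_comm, Ioc_inter_Ioi, max_eq_right hs.1.le]
    _ = ∫⁻ u in Ioc a t, ∫⁻ s in Ioc a t, (Ioi s).indicator (P s) u :=
        lintegral_lintegral_swap hQ.aemeasurable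
    _ = ∫⁻ u in Ioc a t, ∫⁻ s in Ioo a u, P s u := by
        refine setLIntegral_congr_fun measurableSet_Ioc fun u hu => ?_
        have hswap : ∀ s, (Ioi s).indicator (P s) u = (Iio u).indicator (fun s => P s u) s :=
          fun s => by simp [indicator_apply]
        have hset : Iio u ∩ Ioc a t = Ioo a u := by
          ext s
          simp only [mem_inter_iff, mem_Iio, mem_Ioc, mem_Ioo]
          grind
        simp_rw [hswap]
        rw [lintegral_indicator measurableSet_Iio, Measure.restrict_restrict measurableSet_Iio,
          hset]

theorem setLIntegral_Ioo_le_of_forall_lt {μ : Measure ℝ} [SFinite μ] {G : ℝ → ℝ≥0∞}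
    {a t : ℝ} {c : ℝ≥0∞} (h : ∀ y < t, ∫⁻ s in Ioo a y, G s ∂μ ≤ c) :
    ∫⁻ s in Ioo a t, G s ∂μ ≤ c := by
  have hU : ⋃ n : ℕ, Ioo a (t - 1 / (n + 1)) = Ioo a t := by
    ext s
    simp only [mem_iUnion, mem_Ioo]
    constructor
    · rintro ⟨n, has, hst⟩
      exact ⟨has, hst.trans (sub_lt_self _ (by positivity))⟩
    · rintro ⟨has, hst⟩
      obtain ⟨n, hn⟩ := exists_nat_one_div_lt (sub_pos.2 hst)
      exact ⟨n, has, by linarith⟩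
  have hmono : Monotone fun n : ℕ => Ioo a (t - 1 / (n + 1)) := fun m n hmn =>
    Ioo_subset_Ioo_right (by gcongr)
  rw [← withDensity_apply' G, ← hU, hmono.measure_iUnion]
  refine iSup_le fun n => ?_
  rw [withDensity_apply' G]
  exact h _ (sub_lt_self _ (by positivity))

theorem setLIntegral_Ioc_ofReal_eq_intervalIntegral {φ : ℝ → ℝ} {a b : ℝ} (hab : a ≤ b)
    (hφ : IntervalIntegrable φ volume a b) (hφ₀ : ∀ x ∈ Ioc a b, 0 ≤ φ x) :
    ∫⁻ x in Ioc a b, ENNReal.ofReal (φ x) = ENNReal.ofReal (∫ x in a..b, φ x) := by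
  rw [integral_of_le hab, ofReal_integral_eq_lintegral_ofReal hφ.1
    ((ae_restrict_iff' measurableSet_Ioc).2 (Filter.Eventually.of_forall hφ₀))]

theorem intervalIntegral_le_toReal_lintegral {φ : ℝ → ℝ} {a b : ℝ} (hab : a ≤ b)
    (hφ₀ : ∀ x ∈ Ioc a b, 0 ≤ φ x) :
    ∫ x in a..b, φ x ≤ (∫⁻ x in Ioc a b, ENNReal.ofReal (φ x)).toReal := by
  rw [integral_of_le hab]
  refine (le_norm_self _).trans ((norm_integral_le_lintegral_norm φ).trans_eq ?_)
  rw [setLIntegral_congr_fun measurableSet_Ioc fun x hx => by rw [norm_of_nonneg (hφ₀ x hx)]]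

section SingularKernel

variable {α a u t : ℝ}

theorem intervalIntegrable_const_sub_rpow (hau : a ≤ u) (hut : u < t) :
    IntervalIntegrable (fun s => (t - s) ^ (-α - 1)) volume a u := by
  have h0 : (0 : ℝ) ∉ uIcc (t - a) (t - u) := by
    rw [uIcc_of_ge (by linarith)]
    exact fun h => by linarith [h.1]
  simpa using (intervalIntegrable_rpow (r := -α - 1) (Or.inr h0)).comp_sub_left t

theorem integral_const_sub_rpow_neg_sub_one (hα : α ≠ 0) (hau : a ≤ u) (hut : u < t) :
    ∫ s in a..u, (t - s) ^ (-α - 1) = α⁻¹ * ((t - u) ^ (-α) - (t - a) ^ (-α)) := by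
  have h0 : (0 : ℝ) ∉ uIcc (t - u) (t - a) := by
    rw [uIcc_of_le (by linarith)]
    exact fun h => by linarith [h.1]
  rw [integral_comp_sub_left (fun x => x ^ (-α - 1)) t,
    integral_rpow (Or.inr ⟨by contrapose! hα; linarith, h0⟩), show -α - 1 + 1 = -α by ring]
  field_simp
  ring

theorem integral_sub_const_rpow_neg (hα : α < 1) (s : ℝ) :
    ∫ x in s..t, (x - s) ^ (-α) = (t - s) ^ (1 - α) / (1 - α) := by
  rw [integral_comp_sub_right (fun y => y ^ (-α)) s, integral_rpow (Or.inl (by linarith)),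
    sub_self, zero_rpow (by linarith), neg_add_eq_sub, sub_zero]

end SingularKernel

noncomputable def kernelLIntegral (α : ℝ) (g : ℝ → ℝ≥0∞) (t : ℝ) : ℝ≥0∞ :=
  ∫⁻ s in Ioc 0 t, g s * ENNReal.ofReal ((t - s) ^ (-α))

namespace kernelLIntegral

variable {α : ℝ} {g : ℝ → ℝ≥0∞}

theorem measurable (hg : Measurable g) : Measurable (kernelLIntegral α g) := by
  have hS : MeasurableSet {p : ℝ × ℝ | p.2 ∈ Ioc 0 p.1} :=
    (measurableSet_lt measurable_const measurable_snd).inter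
      (measurableSet_le measurable_snd measurable_fst)
  have hF : Measurable ({p : ℝ × ℝ | p.2 ∈ Ioc 0 p.1}.indicator
      fun p => g p.2 * ENNReal.ofReal ((p.1 - p.2) ^ (-α))) :=
    Measurable.indicator (by fun_prop) hS
  convert hF.lintegral_prod_right' (ν := volume) using 2 with t
  rw [kernelLIntegral, ← lintegral_indicator measurableSet_Ioc]
  rfl

theorem setLIntegral_ne_top {t : ℝ} (hα : α < 1) (hg : Measurable g)
    (hgt : ∫⁻ s in Ioc 0 t, g s ≠ ⊤) :
    ∫⁻ x in Ioc 0 t, kernelLIntegral α g x ≠ ⊤ := by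
  refine ne_of_lt ?_
  have hinner : ∀ s ∈ Ioc 0 t, ∫⁻ x in Ioc s t, ENNReal.ofReal ((x - s) ^ (-α)) ≤
      ENNReal.ofReal (t ^ (1 - α) / (1 - α)) := by
    intro s hs
    have hint : IntervalIntegrable (fun x => (x - s) ^ (-α)) volume s t := by
      simpa using (intervalIntegrable_rpow' (a := 0) (b := t - s)
        (by linarith : (-1 : ℝ) < -α)).comp_sub_right s
    rw [setLIntegral_Ioc_ofReal_eq_intervalIntegral hs.2 hint
      fun x hx => rpow_nonneg (by linarith [hx.1]) _, integral_sub_const_rpow_neg hα]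
    gcongr
    · linarith [hs.2]
    · linarith [hs.1]
  have hswap := lintegral_Ioc_lintegral_Ioc_swap 0 t
    (P := fun s x => g s * ENNReal.ofReal ((x - s) ^ (-α))) (by fun_prop)
  calc ∫⁻ x in Ioc 0 t, kernelLIntegral α g x
      = ∫⁻ x in Ioc 0 t, ∫⁻ s in Ioo 0 x, g s * ENNReal.ofReal ((x - s) ^ (-α)) :=
        setLIntegral_congr_fun measurableSet_Ioc fun x _ => setLIntegral_congr Ioo_ae_eq_Ioc.symm
    _ = ∫⁻ s in Ioc 0 t, g s * ∫⁻ x in Ioc s t, ENNReal.ofReal ((x - s) ^ (-α)) := by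
        rw [← hswap]
        exact setLIntegral_congr_fun measurableSet_Ioc fun s _ =>
          lintegral_const_mul _ (by fun_prop)
    _ ≤ ∫⁻ s in Ioc 0 t, g s * ENNReal.ofReal (t ^ (1 - α) / (1 - α)) :=
        setLIntegral_mono (by fun_prop) fun s hs => mul_le_mul_right (hinner s hs) _
    _ < ⊤ := by
        rw [lintegral_mul_const _ hg]
        exact ENNReal.mul_lt_top hgt.lt_top ENNReal.ofReal_lt_top

theorem le_ofReal_of_toReal_le {T M : ℝ} (hα₀ : 0 ≤ α) (hα₁ : α < 1) (hg : Measurable g)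
    (hgT : ∫⁻ s in Ioc 0 T, g s ≠ ⊤) (hM : ∀ t ∈ Icc 0 T, (kernelLIntegral α g t).toReal ≤ M) :
    ∀ t ∈ Icc 0 T, kernelLIntegral α g t ≤ ENNReal.ofReal M := by
  intro t ht
  have hfin : ∀ᵐ x ∂volume.restrict (Ioc 0 t), kernelLIntegral α g x < ⊤ :=
    ae_lt_top (measurable hg) (setLIntegral_ne_top hα₁ hg
      (ne_top_of_le_ne_top hgT (lintegral_mono_set (Ioc_subset_Ioc_right ht.2))))
  rw [kernelLIntegral, ← setLIntegral_congr Ioo_ae_eq_Ioc]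
  refine setLIntegral_Ioo_le_of_forall_lt fun y hy => ?_
  rcases le_or_gt y 0 with hy₀ | hy₀
  · simp [Ioo_eq_empty_of_le hy₀]
  obtain ⟨x, hx, hxfin⟩ : ∃ x ∈ Ioo y t, kernelLIntegral α g x < ⊤ :=
    Measure.exists_mem_of_measure_ne_zero_of_ae (by simp [hy])
      (ae_restrict_of_ae_restrict_of_subset
        (Ioo_subset_Ioc_self.trans (Ioc_subset_Ioc_left hy₀.le)) hfin)
  calc ∫⁻ s in Ioo 0 y, g s * ENNReal.ofReal ((t - s) ^ (-α))
      ≤ ∫⁻ s in Ioo 0 x, g s * ENNReal.ofReal ((x - s) ^ (-α)) :=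
        (lintegral_mono_set (Ioo_subset_Ioo_right hx.1.le)).trans
          (setLIntegral_mono (by fun_prop) fun s hs => mul_le_mul_right (ENNReal.ofReal_le_ofReal
            (rpow_le_rpow_of_nonpos (sub_pos.2 hs.2) (by linarith [hx.2]) (neg_nonpos.2 hα₀))) _)
    _ = kernelLIntegral α g x := setLIntegral_congr Ioo_ae_eq_Ioc
    _ = ENNReal.ofReal (kernelLIntegral α g x).toReal := (ENNReal.ofReal_toReal hxfin.ne).symm
    _ ≤ ENNReal.ofReal M :=
        ENNReal.ofReal_le_ofReal (hM x ⟨hy₀.le.trans hx.1.le, hx.2.le.trans ht.2⟩)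

theorem setLIntegral_le_rpow_mul {t : ℝ} (hα : 0 ≤ α) (g : ℝ → ℝ≥0∞) :
    ∫⁻ s in Ioc 0 t, g s ≤ ENNReal.ofReal (t ^ α) * kernelLIntegral α g t := by
  rw [kernelLIntegral, ← lintegral_const_mul' _ _ ENNReal.ofReal_ne_top,
    ← setLIntegral_congr Ioo_ae_eq_Ioc, ← setLIntegral_congr Ioo_ae_eq_Ioc]
  refine setLIntegral_mono' measurableSet_Ioo fun s hs => ?_
  have hts : 0 < t - s := sub_pos.2 hs.2
  have hone : 1 ≤ t ^ α * (t - s) ^ (-α) := by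
    rw [rpow_neg hts.le, ← div_eq_mul_inv, one_le_div (rpow_pos_of_pos hts _)]
    exact rpow_le_rpow hts.le (by linarith [hs.1]) hα
  calc g s = g s * ENNReal.ofReal 1 := by rw [ENNReal.ofReal_one, mul_one]
    _ ≤ g s * ENNReal.ofReal (t ^ α * (t - s) ^ (-α)) := by gcongr
    _ = ENNReal.ofReal (t ^ α) * (g s * ENNReal.ofReal ((t - s) ^ (-α))) := by
        rw [ENNReal.ofReal_mul (rpow_nonneg (by linarith [hs.1, hs.2]) _)]
        ring

theorem setLIntegral_mul_rpow_neg_sub_one_le {t : ℝ} (hα : 0 < α) {H : ℝ → ℝ≥0∞}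
    (hg : Measurable g) (hH : ∀ s ∈ Ioo 0 t, H s ≤ ∫⁻ u in Ioc s t, g u) :
    ∫⁻ s in Ioc 0 t, H s * ENNReal.ofReal ((t - s) ^ (-α - 1)) ≤
      ENNReal.ofReal α⁻¹ * kernelLIntegral α g t := by
  have hinner : ∀ u ∈ Ioo 0 t, ∫⁻ s in Ioo 0 u, ENNReal.ofReal ((t - s) ^ (-α - 1)) ≤
      ENNReal.ofReal (α⁻¹ * (t - u) ^ (-α)) := by
    intro u hu
    rw [setLIntegral_congr Ioo_ae_eq_Ioc, setLIntegral_Ioc_ofReal_eq_intervalIntegral hu.1.le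
      (intervalIntegrable_const_sub_rpow hu.1.le hu.2)
      fun s hs => rpow_nonneg (by linarith [hs.2, hu.2]) _,
      integral_const_sub_rpow_neg_sub_one hα.ne' hu.1.le hu.2]
    refine ENNReal.ofReal_le_ofReal (mul_le_mul_of_nonneg_left ?_ (inv_nonneg.2 hα.le))
    exact sub_le_self _ (rpow_nonneg (by linarith [hu.1, hu.2]) _)
  calc ∫⁻ s in Ioc 0 t, H s * ENNReal.ofReal ((t - s) ^ (-α - 1))
      = ∫⁻ s in Ioo 0 t, H s * ENNReal.ofReal ((t - s) ^ (-α - 1)) :=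
        setLIntegral_congr Ioo_ae_eq_Ioc.symm
    _ ≤ ∫⁻ s in Ioo 0 t, ∫⁻ u in Ioc s t, g u * ENNReal.ofReal ((t - s) ^ (-α - 1)) :=
        setLIntegral_mono' measurableSet_Ioo fun s hs => by
          rw [lintegral_mul_const _ hg]
          gcongr
          exact hH s hs
    _ = ∫⁻ u in Ioc 0 t, ∫⁻ s in Ioo 0 u, g u * ENNReal.ofReal ((t - s) ^ (-α - 1)) := by
        rw [setLIntegral_congr Ioo_ae_eq_Ioc]
        exact lintegral_Ioc_lintegral_Ioc_swap 0 t (P := fun s u => g u * _) (by fun_prop)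
    _ = ∫⁻ u in Ioo 0 t, g u * ∫⁻ s in Ioo 0 u, ENNReal.ofReal ((t - s) ^ (-α - 1)) := by
        rw [setLIntegral_congr Ioo_ae_eq_Ioc.symm]
        exact setLIntegral_congr_fun measurableSet_Ioo fun u _ =>
          lintegral_const_mul _ (by fun_prop)
    _ ≤ ∫⁻ u in Ioo 0 t, g u * ENNReal.ofReal (α⁻¹ * (t - u) ^ (-α)) :=
        setLIntegral_mono' measurableSet_Ioo fun u hu => by gcongr; exact hinner u hu
    _ = ENNReal.ofReal α⁻¹ * kernelLIntegral α g t := by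
        rw [kernelLIntegral, ← lintegral_const_mul' _ _ ENNReal.ofReal_ne_top,
          setLIntegral_congr Ioo_ae_eq_Ioc]
        refine lintegral_congr fun u => ?_
        rw [ENNReal.ofReal_mul (inv_nonneg.2 hα.le)]
        ring

theorem toReal_eq_intervalIntegral {E : Type*} [NormedAddCommGroup E] {f : ℝ → E}
    (hf : AEStronglyMeasurable f) {t : ℝ} (ht : 0 ≤ t) :
    (kernelLIntegral α (‖f ·‖ₑ) t).toReal = ∫ s in (0 : ℝ)..t, ‖f s‖ * (t - s) ^ (-α) := by
  rw [integral_of_le ht, integral_eq_lintegral_of_nonneg_ae ?_ ?_, kernelLIntegral]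
  · congr 1
    refine lintegral_congr fun s => ?_
    rw [ENNReal.ofReal_mul (norm_nonneg _), ofReal_norm]
  · exact (ae_restrict_iff' measurableSet_Ioc).2 (Filter.Eventually.of_forall fun s hs =>
      mul_nonneg (norm_nonneg _) (rpow_nonneg (by linarith [hs.2]) _))
  · exact hf.restrict.norm.mul
      (by fun_prop : Measurable fun s => (t - s) ^ (-α)).aestronglyMeasurable

end kernelLIntegral

/-- Proposition 4.3 of Nualart–Rascanu: the indefinite integral `F(t)=∫₀ᵗ f`
belongs to `W₀^{α,∞}(0,T)` with the stated bound. -/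
theorem stmt_14 (d : ℕ) (α T : ℝ) (hα : 0 < α) (hα2 : α < 1/2) (hT : 0 < T)
    (f : ℝ → EuclideanSpace ℝ (Fin d)) (hf : Measurable f)
    (hInt : ∀ t ∈ Set.Icc (0:ℝ) T, IntervalIntegrable f MeasureTheory.volume 0 t)
    (M : ℝ)
    (hsup : ∀ t ∈ Set.Icc (0:ℝ) T, (∫ s in (0:ℝ)..t, ‖f s‖ * (t - s) ^ (-α)) ≤ M) :
    ∃ C > 0, ∀ t ∈ Set.Icc (0:ℝ) T,
      ‖(∫ s in (0:ℝ)..t, f s)‖ +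
        (∫ s in (0:ℝ)..t,
          ‖(∫ u in (0:ℝ)..t, f u) - ∫ u in (0:ℝ)..s, f u‖ * (t - s) ^ (-α - 1)) ≤
      C * ∫ s in (0:ℝ)..t, ‖f s‖ * (t - s) ^ (-α) := by
  set K := kernelLIntegral α (‖f ·‖ₑ)
  have hK : ∀ t ∈ Icc 0 T, (K t).toReal = ∫ s in (0:ℝ)..t, ‖f s‖ * (t - s) ^ (-α) :=
    fun t ht => kernelLIntegral.toReal_eq_intervalIntegral hf.aestronglyMeasurable ht.1
  have hKM : ∀ t ∈ Icc 0 T, K t ≤ ENNReal.ofReal M :=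
    kernelLIntegral.le_ofReal_of_toReal_le hα.le (by linarith) hf.enorm
      (hInt T ⟨hT.le, le_rfl⟩).1.2.ne fun t ht => (hK t ht).symm ▸ hsup t ht
  refine ⟨T ^ α + α⁻¹, by positivity, fun t ht => ?_⟩
  have hKt : K t ≠ ⊤ := ne_top_of_le_ne_top ENNReal.ofReal_ne_top (hKM t ht)
  have hprimitive : ‖∫ s in (0:ℝ)..t, f s‖ ≤ T ^ α * (K t).toReal := by
    calc ‖∫ s in (0:ℝ)..t, f s‖ ≤ (∫⁻ s in Ioc 0 t, ‖f s‖ₑ).toReal := by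
          rw [integral_of_le ht.1, ← toReal_enorm]
          exact ENNReal.toReal_mono (hInt t ht).1.2.ne (enorm_integral_le_lintegral_enorm f)
      _ ≤ (ENNReal.ofReal (t ^ α) * K t).toReal :=
          ENNReal.toReal_mono (ENNReal.mul_ne_top ENNReal.ofReal_ne_top hKt)
            (kernelLIntegral.setLIntegral_le_rpow_mul hα.le _)
      _ ≤ T ^ α * (K t).toReal := by
          rw [ENNReal.toReal_mul, ENNReal.toReal_ofReal (rpow_nonneg ht.1 _)]
          gcongr
          exacts [ht.1, ht.2]
  have hincrement : ∫ s in (0:ℝ)..t, ‖(∫ u in (0:ℝ)..t, f u) - ∫ u in (0:ℝ)..s, f u‖ *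
      (t - s) ^ (-α - 1) ≤ α⁻¹ * (K t).toReal := by
    refine (intervalIntegral_le_toReal_lintegral ht.1 fun s hs =>
      mul_nonneg (norm_nonneg _) (rpow_nonneg (by linarith [hs.2]) _)).trans ?_
    rw [← ENNReal.toReal_ofReal (inv_nonneg.2 hα.le), ← ENNReal.toReal_mul]
    refine ENNReal.toReal_mono (ENNReal.mul_ne_top ENNReal.ofReal_ne_top hKt) ?_
    simp_rw [ENNReal.ofReal_mul (norm_nonneg _), ofReal_norm]
    refine kernelLIntegral.setLIntegral_mul_rpow_neg_sub_one_le hα hf.enorm fun s hs => ?_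
    rw [integral_interval_sub_left (hInt t ht) (hInt s ⟨hs.1.le, hs.2.le.trans ht.2⟩),
      integral_of_le hs.2.le]
    exact enorm_integral_le_lintegral_enorm _
  rw [← hK t ht]
  linarith
end

section
/- If f, g : [0,T] → ℝ are Hölder continuous of orders λ and β respectively with λ + β > 1, then the Riemann–Stieltjes integral ∫₀ᵀ f dg exists (Young integral existence). -/
/-!
With `θ = λ + β > 1`, the germ `Ξ(s, t) = f(s) (g(t) - g(s))` satisfies
`|Ξ(s, t) - Ξ(s, u) - Ξ(u, t)| = |f(s) - f(u)| |g(t) - g(u)| ≤ Kf Kg (t - s)^θ`.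
Splitting a partition of `[s, t]` at its last point left of the midpoint and inducting on the
number of intervals gives Young's maximal inequality `|∑ Ξ(tᵢ, tᵢ₊₁) - Ξ(s, t)| ≤ C (t - s)^θ`.
Applied on each interval of a coarse partition, it bounds the change of the Riemann–Stieltjes sum
under refinement by `C ∑ |Δtᵢ|^θ ≤ C δ^(θ-1) T`; going through common refinements, the sums are
Cauchy as the mesh tends to `0` (the sewing lemma). Moving the tags costs another
`Kf Kg ∑ |Δtᵢ|^θ`.
-/

open Finset Filter Topology

lemma exists_pos_mul_rpow_le {c θ ε : ℝ} (hθ : 0 < θ) (hε : 0 < ε) :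
    ∃ δ > 0, c * δ ^ θ ≤ ε := by
  have hlim : Tendsto (fun δ : ℝ => c * δ ^ θ) (𝓝[>] 0) (𝓝 0) := by
    simpa [Real.zero_rpow hθ.ne'] using
      ((Real.continuousAt_rpow_const 0 θ (Or.inr hθ.le)).tendsto.const_mul c).mono_left
        nhdsWithin_le_nhds
  obtain ⟨δ, hδε, hδ⟩ :=
    ((hlim.eventually (ge_mem_nhds hε)).and self_mem_nhdsWithin).exists
  exact ⟨δ, hδ, hδε⟩

lemma exists_norm_sub_le_of_norm_sub_le {ι E : Type*} [NormedAddCommGroup E] [CompleteSpace E]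
    {s : Set ι} {S : ι → E} {w : ι → ℝ}
    (hS : ∀ p ∈ s, ∀ q ∈ s, ‖S p - S q‖ ≤ w p + w q) (hw : ∀ ε > 0, ∃ p ∈ s, w p ≤ ε) :
    ∃ I, ∀ p ∈ s, ‖S p - I‖ ≤ w p := by
  choose p hps hpw using fun N : ℕ => hw (1 / ((N : ℝ) + 1)) Nat.one_div_pos_of_nat
  have hε := tendsto_one_div_add_atTop_nhds_zero_nat (𝕜 := ℝ)
  have hcauchy : CauchySeq fun N => S (p N) := by
    refine cauchySeq_of_le_tendsto_0' (fun N => 2 * (1 / ((N : ℝ) + 1)))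
      (fun N M hNM => ?_) (by simpa using hε.const_mul 2)
    have hM : 1 / ((M : ℝ) + 1) ≤ 1 / ((N : ℝ) + 1) :=
      Nat.one_div_le_one_div hNM
    rw [dist_eq_norm]
    linarith [hS _ (hps N) _ (hps M), hpw N, hpw M]
  obtain ⟨I, hI⟩ := cauchySeq_tendsto_of_complete hcauchy
  refine ⟨I, fun q hq => le_of_tendsto_of_tendsto' ((hI.const_sub (S q)).norm)
    (add_zero (w q) ▸ hε.const_add (w q)) fun N => ?_⟩
  linarith [hS _ hq _ (hps N), hpw N]

lemma Finset.exists_monotone_enum {α : Type*} [LinearOrder α] (A : Finset α) (hA : A.Nonempty) :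
    ∃ (r : ℕ → α) (idx : α → ℕ), Monotone r ∧ Monotone idx ∧ ∀ x ∈ A, r (idx x) = x := by
  classical
  set idx : α → ℕ := fun x => #{y ∈ A | y < x}
  have hidx : Monotone idx := fun x x' hxx' =>
    card_le_card fun y hy => by
      simp only [mem_filter] at hy ⊢
      exact ⟨hy.1, hy.2.trans_le hxx'⟩
  have hidx_lt : ∀ x ∈ A, ∀ x' ∈ A, x < x' → idx x < idx x' := fun x hx x' _ hxx' =>
    card_lt_card <| (ssubset_iff_of_subset fun y hy => by
      simp only [mem_filter] at hy ⊢
      exact ⟨hy.1, hy.2.trans hxx'⟩).2 ⟨x, by simp [hx, hxx']⟩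
  have hmin : idx (A.min' hA) = 0 :=
    card_eq_zero.2 (filter_eq_empty_iff.2 fun y hy => not_lt.2 (A.min'_le y hy))
  have hne : ∀ j, ({y ∈ A | idx y ≤ j} : Finset α).Nonempty := fun j =>
    ⟨A.min' hA, mem_filter.2 ⟨A.min'_mem hA, hmin ▸ j.zero_le⟩⟩
  refine ⟨fun j => ({y ∈ A | idx y ≤ j} : Finset α).max' (hne j), idx, fun j j' hjj' =>
    max'_subset _ fun y hy => ?_, hidx, fun x hx => ?_⟩
  · simp only [mem_filter] at hy ⊢
    exact ⟨hy.1, hy.2.trans hjj'⟩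
  refine (max'_eq_iff _ _ _).2 ⟨mem_filter.2 ⟨hx, le_rfl⟩, fun y hy => ?_⟩
  obtain ⟨hyA, hyx⟩ := mem_filter.1 hy
  exact not_lt.1 fun hxy => (hidx_lt x hx y hyA hxy).not_ge hyx

lemma exists_halving_index {u : ℕ → ℝ} (hu : Monotone u) {p q : ℕ} (hpq : p < q) :
    ∃ j, p ≤ j ∧ j < q ∧ u j - u p ≤ (u q - u p) / 2 ∧ u q - u (j + 1) ≤ (u q - u p) / 2 := by
  classical
  let P : ℕ → Prop := fun j => u j ≤ (u p + u q) / 2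
  have hp : P p := by linarith [hu hpq.le]
  set j := Nat.findGreatest P (q - 1)
  have hj : P j := Nat.findGreatest_spec (m := p) (by omega) hp
  have hjq : j ≤ q - 1 := Nat.findGreatest_le _
  refine ⟨j, Nat.le_findGreatest (by omega) hp, by omega, by linarith, ?_⟩
  rcases (show j + 1 = q ∨ j + 1 ≤ q - 1 by omega) with hq | hq
  · rw [hq]; linarith [hu hpq.le]
  · linarith [not_le.1 (Nat.findGreatest_is_greatest (P := P) (Nat.lt_succ_self j) hq)]

structure IsPartition (a b : ℝ) (n : ℕ) (t : ℕ → ℝ) : Prop where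
  zero_eq : t 0 = a
  last_eq : t n = b
  le_succ : ∀ i < n, t i ≤ t (i + 1)

namespace IsPartition

variable {a b : ℝ} {n : ℕ} {t : ℕ → ℝ}

lemma monotone_min (ht : IsPartition a b n t) : Monotone fun i => t (min i n) := by
  refine monotone_nat_of_le_succ fun i => ?_
  rcases lt_or_ge i n with h | h
  · rw [min_eq_left h.le, min_eq_left h]
    exact ht.le_succ i h
  · rw [min_eq_right h, min_eq_right (by omega)]

lemma mem_Icc (ht : IsPartition a b n t) {i : ℕ} (hi : i ≤ n) : t i ∈ Set.Icc a b := by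
  have h := ht.monotone_min
  refine ⟨?_, ?_⟩
  · simpa [ht.zero_eq, min_eq_left hi] using h i.zero_le
  · simpa [ht.last_eq, min_eq_left hi] using h hi

end IsPartition

lemma sum_rpow_sub_le {θ δ : ℝ} (hθ : 1 ≤ θ) {n : ℕ} {t : ℕ → ℝ}
    (ht : ∀ i < n, t i ≤ t (i + 1)) (hδ : ∀ i < n, t (i + 1) - t i ≤ δ) :
    ∑ i ∈ range n, (t (i + 1) - t i) ^ θ ≤ δ ^ (θ - 1) * (t n - t 0) := by
  rw [← sum_range_sub, mul_sum]
  refine sum_le_sum fun i hi => ?_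
  have hΔ : 0 ≤ t (i + 1) - t i := sub_nonneg.2 (ht i (mem_range.1 hi))
  calc (t (i + 1) - t i) ^ θ = (t (i + 1) - t i) ^ (θ - 1) * (t (i + 1) - t i) ^ (1 : ℝ) := by
        rw [← Real.rpow_add' hΔ (by linarith), sub_add_cancel]
    _ ≤ δ ^ (θ - 1) * (t (i + 1) - t i) := by
        rw [Real.rpow_one]
        exact mul_le_mul_of_nonneg_right
          (Real.rpow_le_rpow hΔ (hδ i (mem_range.1 hi)) (by linarith)) hΔ

lemma exists_isPartition_mesh_le {a b δ : ℝ} (hab : a ≤ b) (hδ : 0 < δ) :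
    ∃ n t, IsPartition a b n t ∧ ∀ i < n, t (i + 1) - t i ≤ δ := by
  refine ⟨⌈(b - a) / δ⌉₊, fun i => min (a + i * δ) b, ⟨by simpa, ?_, fun i _ => ?_⟩,
    fun i _ => ?_⟩
  · have : (b - a) / δ ≤ ⌈(b - a) / δ⌉₊ := Nat.le_ceil _
    rw [div_le_iff₀ hδ] at this
    exact min_eq_right (by linarith)
  · exact min_le_min_right b (by push_cast; linarith)
  · push_cast
    rw [add_one_mul, ← add_assoc]
    rcases le_total (a + i * δ) b with h | h
    · linarith [min_eq_left h, min_le_left (a + i * δ + δ) b]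
    · rw [min_eq_right h, min_eq_right (by linarith)]
      linarith

/-- The fixed point of `C ↦ 2 (C / 2 ^ θ) + 2 K`, the recursion produced by halving a partition
in `norm_sum_Ico_sub_le`. -/
noncomputable def sewingConst (K θ : ℝ) : ℝ := 2 * K * 2 ^ θ / (2 ^ θ - 2)

lemma sewingConst_nonneg {K θ : ℝ} (hK : 0 ≤ K) (hθ : 1 < θ) : 0 ≤ sewingConst K θ := by
  have : 2 < (2 : ℝ) ^ θ := by simpa using Real.rpow_lt_rpow_of_exponent_lt one_lt_two hθ
  unfold sewingConst
  positivity

lemma sewingConst_mul_rpow_add_le {K θ L x y z : ℝ} (hK : 0 ≤ K) (hθ : 1 < θ)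
    (hx : 0 ≤ x) (hxL : x ≤ L / 2) (hy : 0 ≤ y) (hyL : y ≤ L / 2) (hz : 0 ≤ z) (hzL : z ≤ L) :
    sewingConst K θ * x ^ θ + sewingConst K θ * y ^ θ + K * L ^ θ + K * z ^ θ
      ≤ sewingConst K θ * L ^ θ := by
  have h2θ : 2 < (2 : ℝ) ^ θ := by
    simpa using Real.rpow_lt_rpow_of_exponent_lt one_lt_two hθ
  have hC := sewingConst_nonneg hK hθ
  have hL : 0 ≤ L := by linarith
  have hrec : 2 * (sewingConst K θ * (L / 2) ^ θ) + 2 * (K * L ^ θ)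
      = sewingConst K θ * L ^ θ := by
    have : (2 : ℝ) ^ θ - 2 ≠ 0 := by linarith
    rw [Real.div_rpow hL zero_le_two, sewingConst]
    field_simp
    ring
  have hθ0 : 0 ≤ θ := by linarith
  have hx' := mul_le_mul_of_nonneg_left (Real.rpow_le_rpow hx hxL hθ0) hC
  have hy' := mul_le_mul_of_nonneg_left (Real.rpow_le_rpow hy hyL hθ0) hC
  have hz' := mul_le_mul_of_nonneg_left (Real.rpow_le_rpow hz hzL hθ0) hK
  linarith

section Sewing

variable {E : Type*} [NormedAddCommGroup E] {Ξ : ℝ → ℝ → E} {K θ a b : ℝ}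

def HasSewingBound (Ξ : ℝ → ℝ → E) (K θ a b : ℝ) : Prop :=
  ∀ s u t, a ≤ s → s ≤ u → u ≤ t → t ≤ b → ‖Ξ s t - Ξ s u - Ξ u t‖ ≤ K * (t - s) ^ θ

lemma HasSewingBound.apply_self (hΞ : HasSewingBound Ξ K θ a b) (hθ : 0 < θ) {x : ℝ}
    (hax : a ≤ x) (hxb : x ≤ b) : Ξ x x = 0 := by
  simpa [Real.zero_rpow hθ.ne'] using hΞ x x x hax le_rfl le_rfl hxb

lemma norm_sum_Ico_sub_le (hθ : 1 < θ) (hK : 0 ≤ K) (hΞ : HasSewingBound Ξ K θ a b)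
    {u : ℕ → ℝ} (hu : Monotone u) {p q : ℕ} (hpq : p ≤ q) (ha : a ≤ u p) (hb : u q ≤ b) :
    ‖∑ j ∈ Ico p q, Ξ (u j) (u (j + 1)) - Ξ (u p) (u q)‖
      ≤ sewingConst K θ * (u q - u p) ^ θ := by
  induction hd : q - p using Nat.strong_induction_on generalizing p q with
  | _ d ih =>
    rcases hpq.eq_or_lt with rfl | hpq
    · simp [hΞ.apply_self (by linarith) ha hb, Real.zero_rpow (by linarith : θ ≠ 0)]
    obtain ⟨j, hpj, hjq, hleft, hright⟩ := exists_halving_index hu hpq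
    have hupj := hu hpj
    have hujq := hu hjq.le
    have huj1 := hu j.le_succ
    have huj1q := hu hjq
    have hIH₁ := ih (j - p) (by omega) hpj ha (hujq.trans hb) rfl
    have hIH₂ := ih (q - (j + 1)) (by omega) hjq ((ha.trans hupj).trans huj1) hb rfl
    have hδ₁ := hΞ (u p) (u j) (u q) ha hupj hujq hb
    have hδ₂ := hΞ (u j) (u (j + 1)) (u q) (ha.trans hupj) huj1 huj1q hb
    have hsplit : ∑ i ∈ Ico p q, Ξ (u i) (u (i + 1)) - Ξ (u p) (u q)
        = (∑ i ∈ Ico p j, Ξ (u i) (u (i + 1)) - Ξ (u p) (u j))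
          + (∑ i ∈ Ico (j + 1) q, Ξ (u i) (u (i + 1)) - Ξ (u (j + 1)) (u q))
          - (Ξ (u p) (u q) - Ξ (u p) (u j) - Ξ (u j) (u q))
          - (Ξ (u j) (u q) - Ξ (u j) (u (j + 1)) - Ξ (u (j + 1)) (u q)) := by
      rw [← sum_Ico_consecutive _ hpj hjq.le, sum_eq_sum_Ico_succ_bot hjq]
      abel
    rw [hsplit]
    refine (norm_sub_le _ _).trans <| (add_le_add ((norm_sub_le _ _).trans <| add_le_add
      ((norm_add_le _ _).trans (add_le_add hIH₁ hIH₂)) hδ₁) hδ₂).trans ?_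
    exact sewingConst_mul_rpow_add_le hK hθ (by linarith) hleft (by linarith) hright
      (by linarith) (by linarith)

lemma norm_sum_Ico_sub_sum_le (hθ : 1 < θ) (hK : 0 ≤ K) (hΞ : HasSewingBound Ξ K θ a b)
    {u t : ℕ → ℝ} {k : ℕ → ℕ} {n : ℕ} (hu : Monotone u) (hk : Monotone k)
    (hukt : ∀ i ≤ n, u (k i) = t i) (ha : a ≤ t 0) (hb : t n ≤ b) :
    ‖∑ j ∈ Ico (k 0) (k n), Ξ (u j) (u (j + 1)) - ∑ i ∈ range n, Ξ (t i) (t (i + 1))‖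
      ≤ sewingConst K θ * ∑ i ∈ range n, (t (i + 1) - t i) ^ θ := by
  have hblocks : ∀ m ≤ n, ∑ j ∈ Ico (k 0) (k m), Ξ (u j) (u (j + 1))
      = ∑ i ∈ range m, ∑ j ∈ Ico (k i) (k (i + 1)), Ξ (u j) (u (j + 1)) := by
    intro m hm
    induction m with
    | zero => simp
    | succ m ih =>
      rw [sum_range_succ, ← ih (by omega),
        sum_Ico_consecutive _ (hk m.zero_le) (hk m.le_succ)]
  rw [hblocks n le_rfl, ← sum_sub_distrib, mul_sum]
  refine (norm_sum_le _ _).trans (sum_le_sum fun i hi => ?_)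
  have hi : i < n := mem_range.1 hi
  rw [← hukt i hi.le, ← hukt (i + 1) hi]
  refine norm_sum_Ico_sub_le hθ hK hΞ hu (hk i.le_succ) ?_ ?_
  · exact ha.trans (hukt 0 n.zero_le ▸ hu (hk i.zero_le))
  · exact (hu (hk hi)).trans (hukt n le_rfl ▸ hb)

lemma norm_sum_sub_sum_le (hθ : 1 < θ) (hK : 0 ≤ K) (hΞ : HasSewingBound Ξ K θ a b)
    {n m : ℕ} {t s : ℕ → ℝ} (ht : IsPartition a b n t) (hs : IsPartition a b m s) :
    ‖∑ i ∈ range n, Ξ (t i) (t (i + 1)) - ∑ j ∈ range m, Ξ (s j) (s (j + 1))‖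
      ≤ sewingConst K θ * ∑ i ∈ range n, (t (i + 1) - t i) ^ θ
        + sewingConst K θ * ∑ j ∈ range m, (s (j + 1) - s j) ^ θ := by
  classical
  -- `r` runs through the common refinement; `idx` locates the points of `t` and `s` in it.
  obtain ⟨r, idx, hr, hidx, hridx⟩ :=
    ((range (n + 1)).image t ∪ (range (m + 1)).image s).exists_monotone_enum
      ⟨a, mem_union_left _ (mem_image.2 ⟨0, by simp, ht.zero_eq⟩)⟩
  have hrt : ∀ i ≤ n, r (idx (t (min i n))) = t i := fun i hi => by
    rw [min_eq_left hi]
    exact hridx _ (mem_union_left _ (mem_image_of_mem t (mem_range.2 (Nat.lt_succ_of_le hi))))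
  have hrs : ∀ j ≤ m, r (idx (s (min j m))) = s j := fun j hj => by
    rw [min_eq_left hj]
    exact hridx _ (mem_union_right _ (mem_image_of_mem s (mem_range.2 (Nat.lt_succ_of_le hj))))
  have h₁ := norm_sum_Ico_sub_sum_le hθ hK hΞ hr (hidx.comp ht.monotone_min) hrt
    ht.zero_eq.ge ht.last_eq.le
  have h₂ := norm_sum_Ico_sub_sum_le hθ hK hΞ hr (hidx.comp hs.monotone_min) hrs
    hs.zero_eq.ge hs.last_eq.le
  simp only [Function.comp_apply, min_self, Nat.zero_min, ht.zero_eq, ht.last_eq, hs.zero_eq,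
    hs.last_eq] at h₁ h₂
  exact (norm_sub_le_norm_sub_add_norm_sub _ _ _).trans
    (add_le_add (by rwa [norm_sub_rev]) h₂)

theorem exists_sewing [CompleteSpace E] (hθ : 1 < θ) (hK : 0 ≤ K) (hab : a ≤ b)
    (hΞ : HasSewingBound Ξ K θ a b) :
    ∃ I : E, ∀ n t, IsPartition a b n t →
      ‖∑ i ∈ range n, Ξ (t i) (t (i + 1)) - I‖
        ≤ sewingConst K θ * ∑ i ∈ range n, (t (i + 1) - t i) ^ θ := by
  refine (exists_norm_sub_le_of_norm_sub_le
    (s := {p : ℕ × (ℕ → ℝ) | IsPartition a b p.1 p.2})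
    (S := fun p => ∑ i ∈ range p.1, Ξ (p.2 i) (p.2 (i + 1)))
    (w := fun p => sewingConst K θ * ∑ i ∈ range p.1, (p.2 (i + 1) - p.2 i) ^ θ)
    (fun p hp q hq => norm_sum_sub_sum_le hθ hK hΞ hp hq) fun ε hε => ?_).imp
    fun I hI n t ht => hI (n, t) ht
  obtain ⟨δ, hδ, hδε⟩ := exists_pos_mul_rpow_le (c := sewingConst K θ * (b - a))
    (sub_pos.2 hθ) hε
  obtain ⟨n, t, ht, hmesh⟩ := exists_isPartition_mesh_le hab hδ
  have hvar := sum_rpow_sub_le hθ.le ht.le_succ hmesh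
  rw [ht.zero_eq, ht.last_eq] at hvar
  refine ⟨(n, t), ht, ?_⟩
  nlinarith [sewingConst_nonneg hK hθ]

end Sewing

section Young

variable {a b lam β Kf Kg : ℝ} {f g : ℝ → ℝ}

lemma abs_sub_mul_sub_le_of_holder (hlam : 0 < lam) (hβ : 0 < β) (hKf : 0 ≤ Kf) (hKg : 0 ≤ Kg)
    (hf : ∀ s ∈ Set.Icc a b, ∀ t ∈ Set.Icc a b, |f t - f s| ≤ Kf * |t - s| ^ lam)
    (hg : ∀ s ∈ Set.Icc a b, ∀ t ∈ Set.Icc a b, |g t - g s| ≤ Kg * |t - s| ^ β)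
    {x y z w d : ℝ} (hx : x ∈ Set.Icc a b) (hy : y ∈ Set.Icc a b) (hz : z ∈ Set.Icc a b)
    (hw : w ∈ Set.Icc a b) (hxy : |x - y| ≤ d) (hzw : |z - w| ≤ d) :
    |(f x - f y) * (g z - g w)| ≤ Kf * Kg * d ^ (lam + β) := by
  have hd : 0 ≤ d := (abs_nonneg _).trans hxy
  rw [abs_mul, Real.rpow_add' hd (by linarith), mul_mul_mul_comm]
  have hfxy := (hf y hy x hx).trans
    (mul_le_mul_of_nonneg_left (Real.rpow_le_rpow (abs_nonneg _) hxy hlam.le) hKf)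
  have hgzw := (hg w hw z hz).trans
    (mul_le_mul_of_nonneg_left (Real.rpow_le_rpow (abs_nonneg _) hzw hβ.le) hKg)
  exact mul_le_mul hfxy hgzw (abs_nonneg _) (mul_nonneg hKf (Real.rpow_nonneg hd _))

theorem exists_young_integral (hab : a ≤ b) (hlam : 0 < lam) (hβ : 0 < β) (hθ : 1 < lam + β)
    (hKf : 0 ≤ Kf) (hKg : 0 ≤ Kg)
    (hf : ∀ s ∈ Set.Icc a b, ∀ t ∈ Set.Icc a b, |f t - f s| ≤ Kf * |t - s| ^ lam)
    (hg : ∀ s ∈ Set.Icc a b, ∀ t ∈ Set.Icc a b, |g t - g s| ≤ Kg * |t - s| ^ β) :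
    ∃ I : ℝ, ∀ n t (ξ : ℕ → ℝ), IsPartition a b n t → (∀ i < n, ξ i ∈ Set.Icc (t i) (t (i + 1))) →
      |∑ i ∈ range n, f (ξ i) * (g (t (i + 1)) - g (t i)) - I|
        ≤ (sewingConst (Kf * Kg) (lam + β) + Kf * Kg)
          * ∑ i ∈ range n, (t (i + 1) - t i) ^ (lam + β) := by
  obtain ⟨I, hI⟩ := exists_sewing (Ξ := fun s t => f s * (g t - g s)) hθ (mul_nonneg hKf hKg) hab
    fun s u t has hsu hut htb => by
      have hs : s ∈ Set.Icc a b := ⟨has, by linarith⟩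
      have hu : u ∈ Set.Icc a b := ⟨by linarith, by linarith⟩
      have ht : t ∈ Set.Icc a b := ⟨by linarith, htb⟩
      rw [Real.norm_eq_abs, show f s * (g t - g s) - f s * (g u - g s) - f u * (g t - g u)
        = (f s - f u) * (g t - g u) by ring]
      exact abs_sub_mul_sub_le_of_holder hlam hβ hKf hKg hf hg hs hu ht hu
        (by rw [abs_of_nonpos] <;> linarith) (by rw [abs_of_nonneg] <;> linarith)
  refine ⟨I, fun n t ξ ht hξ => ?_⟩
  have htags : |∑ i ∈ range n, f (ξ i) * (g (t (i + 1)) - g (t i))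
      - ∑ i ∈ range n, f (t i) * (g (t (i + 1)) - g (t i))|
      ≤ Kf * Kg * ∑ i ∈ range n, (t (i + 1) - t i) ^ (lam + β) := by
    rw [← sum_sub_distrib, mul_sum]
    refine (abs_sum_le_sum_abs _ _).trans (sum_le_sum fun i hi => ?_)
    have hi : i < n := mem_range.1 hi
    have hti := ht.mem_Icc hi.le
    have hti1 := ht.mem_Icc hi
    rw [← sub_mul]
    obtain ⟨hξl, hξr⟩ := hξ i hi
    exact abs_sub_mul_sub_le_of_holder hlam hβ hKf hKg hf hg
      ⟨hti.1.trans hξl, hξr.trans hti1.2⟩ hti hti1 hti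
      (by rw [abs_of_nonneg] <;> linarith) (abs_of_nonneg (by linarith)).le
  rw [add_mul, add_comm]
  exact (abs_sub_le _ _ _).trans (add_le_add htags (hI n t ht))

end Young

theorem stmt_15_general (T lam β Kf Kg : ℝ) (f g : ℝ → ℝ)
    (hT : 0 < T) (hlam : 0 < lam) (hβ : 0 < β)
    (hsum : 1 < lam + β) (hKf : 0 ≤ Kf) (hKg : 0 ≤ Kg)
    (hf : ∀ s ∈ Set.Icc (0:ℝ) T, ∀ t ∈ Set.Icc (0:ℝ) T, |f t - f s| ≤ Kf * |t - s| ^ lam)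
    (hg : ∀ s ∈ Set.Icc (0:ℝ) T, ∀ t ∈ Set.Icc (0:ℝ) T, |g t - g s| ≤ Kg * |t - s| ^ β) :
    ∃ I : ℝ, ∀ ε > 0, ∃ δ > 0, ∀ (n : ℕ) (t ξ : ℕ → ℝ),
      0 < n →
      t 0 = 0 → t n = T →
      (∀ i < n, t i ≤ t (i + 1)) →
      (∀ i < n, t (i + 1) - t i ≤ δ) →
      (∀ i < n, ξ i ∈ Set.Icc (t i) (t (i + 1))) →
      |(∑ i ∈ Finset.range n, f (ξ i) * (g (t (i + 1)) - g (t i))) - I| ≤ ε := by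
  obtain ⟨I, hI⟩ := exists_young_integral hT.le hlam hβ hsum hKf hKg hf hg
  refine ⟨I, fun ε hε => ?_⟩
  set C := sewingConst (Kf * Kg) (lam + β) + Kf * Kg
  have hC : 0 ≤ C := add_nonneg (sewingConst_nonneg (mul_nonneg hKf hKg) hsum) (mul_nonneg hKf hKg)
  obtain ⟨δ, hδ, hδε⟩ := exists_pos_mul_rpow_le (c := C * T) (sub_pos.2 hsum) hε
  refine ⟨δ, hδ, fun n t ξ _ ht0 htn hts hmesh hξ => ?_⟩
  have hvar := sum_rpow_sub_le hsum.le hts hmesh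
  rw [ht0, htn, sub_zero] at hvar
  calc _ ≤ C * ∑ i ∈ range n, (t (i + 1) - t i) ^ (lam + β) := hI n t ξ ⟨ht0, htn, hts⟩ hξ
    _ ≤ C * (δ ^ (lam + β - 1) * T) := mul_le_mul_of_nonneg_left hvar hC
    _ ≤ ε := by linarith

/-- Young's theorem: if `f` is `λ`-Hölder and `g` is `β`-Hölder on `[0,T]` with
`λ + β > 1`, then the Riemann–Stieltjes sums of `∫₀ᵀ f dg` converge as the mesh
of the tagged partition tends to `0`. -/
theorem stmt_15 (T lam β Kf Kg : ℝ) (f g : ℝ → ℝ)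
    (hT : 0 < T) (hlam : 0 < lam) (hlam1 : lam ≤ 1) (hβ : 0 < β) (hβ1 : β ≤ 1)
    (hsum : 1 < lam + β) (hKf : 0 ≤ Kf) (hKg : 0 ≤ Kg)
    (hf : ∀ s ∈ Set.Icc (0:ℝ) T, ∀ t ∈ Set.Icc (0:ℝ) T, |f t - f s| ≤ Kf * |t - s| ^ lam)
    (hg : ∀ s ∈ Set.Icc (0:ℝ) T, ∀ t ∈ Set.Icc (0:ℝ) T, |g t - g s| ≤ Kg * |t - s| ^ β) :
    ∃ I : ℝ, ∀ ε > 0, ∃ δ > 0, ∀ (n : ℕ) (t ξ : ℕ → ℝ),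
      0 < n →
      t 0 = 0 → t n = T →
      (∀ i < n, t i ≤ t (i + 1)) →
      (∀ i < n, t (i + 1) - t i ≤ δ) →
      (∀ i < n, ξ i ∈ Set.Icc (t i) (t (i + 1))) →
      |(∑ i ∈ Finset.range n, f (ξ i) * (g (t (i + 1)) - g (t i))) - I| ≤ ε :=
  stmt_15_general T lam β Kf Kg f g hT hlam hβ hsum hKf hKg hf hg
end
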